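/- arXiv:2501.12293 — 9 statements merged into one kernel-verified Lean document; each statement's English description precedes it below -/
import Mathlib

section
/- Let G = (L ∪ R, E) be a (c,d,α,δ)-bipartite expander with |L| = n. Then for any subset S ⊆ L with |S| ≤ αn and any integer t ≥ 0, the number of right vertices adjacent to at most t vertices of S satisfies |N_{≤t}(S)| ≥ ((δ(t+1) − 1)/t) · c|S| (for t ≥ 1). -/
open Finset
open scoped Classical

/-!
Counting the `c|S|` edges leaving `S` by their right endpoints, a vertex of `N_{≤t}(S)` accounts
for at least one edge and a vertex of `N(S) \ N_{≤t}(S)` for at least `t + 1`, so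
`(t + 1)|N(S)| ≤ t|N_{≤t}(S)| + c|S|`. Combined with `|N(S)| ≥ δc|S|` this rearranges to the bound.
-/

theorem succ_mul_card_pos_le {β : Type*} (s : Finset β) (f : β → ℕ) (t : ℕ) :
    (t + 1) * #{v ∈ s | 0 < f v} ≤ t * #{v ∈ s | 0 < f v ∧ f v ≤ t} + ∑ v ∈ s, f v := by
  simp only [card_filter, mul_sum, ← sum_add_distrib]
  refine sum_le_sum fun v _ => ?_
  split_ifs <;> omega

theorem card_filter_card_pos_eq {α β : Type*} [Fintype β] (Adj : α → β → Prop) (S : Finset α)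
    [DecidablePred fun v => ∃ u ∈ S, Adj u v] :
    #{v | 0 < #{u ∈ S | Adj u v}} = #{v | ∃ u ∈ S, Adj u v} := by
  simp only [card_pos, filter_nonempty_iff]

theorem sum_card_filter_adj_eq {α β : Type*} [Fintype β] (Adj : α → β → Prop) (S : Finset α)
    {c : ℕ} (hleft : ∀ u, #{v | Adj u v} = c) :
    ∑ v, #{u ∈ S | Adj u v} = c * #S := by
  have := sum_card_bipartiteAbove_eq_sum_card_bipartiteBelow (s := S) (t := univ) (r := Adj)
  simp only [bipartiteAbove, bipartiteBelow, hleft, sum_const, smul_eq_mul] at this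
  rw [← this, mul_comm]

theorem stmt0_general (n c t : ℕ) (α δ : ℝ) (R : Type*) [Fintype R]
    (Adj : Fin n → R → Prop)
    (hleft : ∀ u : Fin n, (Finset.univ.filter (fun v : R => Adj u v)).card = c)
    (hexp : ∀ S : Finset (Fin n), (S.card : ℝ) ≤ α * n →
      δ * c * S.card ≤ ((Finset.univ.filter (fun v : R => ∃ u ∈ S, Adj u v)).card : ℝ))
    (ht : 1 ≤ t)
    (S : Finset (Fin n)) (hS : (S.card : ℝ) ≤ α * n) :
    (δ * (t + 1) - 1) / t * (c * S.card) ≤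
      ((Finset.univ.filter (fun v : R =>
        0 < (S.filter (fun u => Adj u v)).card ∧ (S.filter (fun u => Adj u v)).card ≤ t)).card : ℝ) := by
  have hcount := succ_mul_card_pos_le univ (fun v => #{u ∈ S | Adj u v}) t
  rw [card_filter_card_pos_eq, sum_card_filter_adj_eq Adj S hleft] at hcount
  have hcountR : ((t : ℝ) + 1) * #{v | ∃ u ∈ S, Adj u v} ≤
      t * #{v | 0 < #{u ∈ S | Adj u v} ∧ #{u ∈ S | Adj u v} ≤ t} + c * #S := by
    exact_mod_cast hcount
  have hexpS := hexp S hS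
  have htpos : (0 : ℝ) < t := by exact_mod_cast ht
  rw [div_mul_eq_mul_div, div_le_iff₀ htpos]
  nlinarith

/-- For a `(c,d,α,δ)`-bipartite expander with left part `Fin n`,
any `S ⊆ L` with `|S| ≤ αn` and any `t ≥ 1` satisfies
`|N_{≤t}(S)| ≥ ((δ(t+1) − 1)/t) · c|S|`. -/
theorem stmt0 (n c d t : ℕ) (α δ : ℝ) (R : Type*) [Fintype R]
    (Adj : Fin n → R → Prop)
    (hleft : ∀ u : Fin n, (Finset.univ.filter (fun v : R => Adj u v)).card = c)
    (hright : ∀ v : R, (Finset.univ.filter (fun u : Fin n => Adj u v)).card = d)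
    (hexp : ∀ S : Finset (Fin n), (S.card : ℝ) ≤ α * n →
      δ * c * S.card ≤ ((Finset.univ.filter (fun v : R => ∃ u ∈ S, Adj u v)).card : ℝ))
    (ht : 1 ≤ t)
    (S : Finset (Fin n)) (hS : (S.card : ℝ) ≤ α * n) :
    (δ * (t + 1) - 1) / t * (c * S.card) ≤
      ((Finset.univ.filter (fun v : R =>
        0 < (S.filter (fun u => Adj u v)).card ∧ (S.filter (fun u => Adj u v)).card ≤ t)).card : ℝ) :=
  stmt0_general n c t α δ R Adj hleft hexp ht S hS
end

section
/- Let m > 0 and i ≥ 0 be integers, and let k > 1 be a real number with i ≤ km − m, where km is an integer. Then binom(km − i, m) / binom(km, m) ≤ (1 − 1/k)^i, and moreover binom(km − i, m) / binom(km, m) ≥ (1 − 1/k)^i · (1 − i(i−1)/(2(k−1)(km − i))). -/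
open Finset in
private lemma stmt6_aux (m K : ℕ) (k : ℝ) (hm : 0 < m) (hk : 1 < k)
    (hK : (K : ℝ) = k * m) :
    ∀ i : ℕ, i + m ≤ K →
      ((K - i).choose m : ℝ) / (K.choose m : ℝ) ≤ (1 - 1 / k) ^ i ∧
      (1 - 1 / k) ^ i * (1 - ∑ j ∈ range i, (j : ℝ) / ((k - 1) * ((K : ℝ) - j))) ≤
        ((K - i).choose m : ℝ) / (K.choose m : ℝ) := by
  have hk0 : (0:ℝ) < k := lt_trans one_pos hk
  have hk1 : (0:ℝ) < k - 1 := by linarith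
  have h1k : (0:ℝ) ≤ 1 - 1/k := by
    rw [sub_nonneg, div_le_one hk0]; linarith
  intro i
  induction i with
  | zero =>
    intro h
    have hC : (0:ℝ) < (K.choose m : ℝ) := by
      exact_mod_cast Nat.choose_pos (by omega)
    simp [div_self (ne_of_gt hC)]
  | succ i ih =>
    intro h
    have hiK : i + m + 1 ≤ K := by omega
    have hiKr : (i : ℝ) + m + 1 ≤ K := by exact_mod_cast hiK
    have hmr : (0:ℝ) < m := by exact_mod_cast hm
    have hKi : (0:ℝ) < (K:ℝ) - i := by linarith
    have hKim : (0:ℝ) < (K:ℝ) - i - m := by linarith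
    have hC : (0:ℝ) < (K.choose m : ℝ) := by
      exact_mod_cast Nat.choose_pos (by omega)
    obtain ⟨ihu, ihl⟩ := ih (by omega)
    -- key recurrence
    have hrec : ((K - (i+1)).choose m : ℝ) * ((K:ℝ) - i)
        = ((K - i).choose m : ℝ) * ((K:ℝ) - i - m) := by
      have hid := Nat.choose_mul_succ_eq (K - (i+1)) m
      have hn : K - (i+1) + 1 = K - i := by omega
      rw [hn] at hid
      have hid' := congrArg (Nat.cast : ℕ → ℝ) hid
      push_cast [Nat.cast_sub (show i ≤ K by omega),
        Nat.cast_sub (show m ≤ K - i by omega)] at hid'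
      linarith
    have hB : ((K - (i+1)).choose m : ℝ) / (K.choose m : ℝ)
        = ((K - i).choose m : ℝ) / (K.choose m : ℝ)
          * (((K:ℝ) - i - m) / ((K:ℝ) - i)) := by
      rw [div_mul_div_comm, div_eq_div_iff (ne_of_gt hC) (ne_of_gt (mul_pos hC hKi))]
      linear_combination ((K.choose m : ℝ)) * hrec
    constructor
    · -- upper bound
      have hfac : ((K:ℝ) - i - m) / ((K:ℝ) - i) ≤ 1 - 1/k := by
        rw [div_le_iff₀ hKi]
        have h1k' : 1 - 1/k = (k - 1)/k := by field_simp
        rw [h1k']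
        rw [div_mul_eq_mul_div, le_div_iff₀ hk0]
        nlinarith [Nat.cast_nonneg (α := ℝ) i]
      rw [hB, pow_succ]
      have hA0 : 0 ≤ ((K - i).choose m : ℝ) / (K.choose m : ℝ) :=
        div_nonneg (Nat.cast_nonneg _) (Nat.cast_nonneg _)
      exact mul_le_mul ihu hfac (le_of_lt (div_pos hKim hKi)) (pow_nonneg h1k i)
    · -- lower bound
      set x : ℝ := (i : ℝ) / ((k - 1) * ((K:ℝ) - i)) with hx
      have hx0 : 0 ≤ x := div_nonneg (Nat.cast_nonneg _) (le_of_lt (mul_pos hk1 hKi))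
      have hx1 : x ≤ 1 := by
        rw [hx, div_le_one (mul_pos hk1 hKi)]
        nlinarith [mul_nonneg (le_of_lt hk1) (le_of_lt hKim)]
      have hfac_eq : ((K:ℝ) - i - m) / ((K:ℝ) - i) = (1 - 1/k) * (1 - x) := by
        rw [hx, hK]
        have hki' : (0:ℝ) < k * m - i := by rw [← hK]; exact hKi
        field_simp
        ring
      have hS0 : 0 ≤ ∑ j ∈ range i, (j : ℝ) / ((k - 1) * ((K : ℝ) - j)) := by
        apply Finset.sum_nonneg
        intro j hj
        have hj' : j < i := Finset.mem_range.mp hj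
        have : (0:ℝ) < (K:ℝ) - j := by
          have : (j:ℝ) ≤ i := by exact_mod_cast le_of_lt hj'
          linarith
        exact div_nonneg (Nat.cast_nonneg _) (le_of_lt (mul_pos hk1 this))
      rw [hB, hfac_eq, Finset.sum_range_succ]
      have hc0 : 0 ≤ (1 - 1/k) * (1 - x) :=
        mul_nonneg h1k (by linarith)
      calc (1 - 1/k)^(i+1) * (1 - (∑ j ∈ range i, (j : ℝ) / ((k - 1) * ((K : ℝ) - j)) + x))
          ≤ (1 - 1/k)^(i+1) * ((1 - ∑ j ∈ range i, (j : ℝ) / ((k - 1) * ((K : ℝ) - j))) * (1 - x)) := by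
            apply mul_le_mul_of_nonneg_left _ (pow_nonneg h1k (i+1))
            nlinarith
        _ = ((1 - 1/k)^i * (1 - ∑ j ∈ range i, (j : ℝ) / ((k - 1) * ((K : ℝ) - j)))) * ((1 - 1/k) * (1 - x)) := by
            rw [pow_succ]; ring
        _ ≤ ((K - i).choose m : ℝ) / (K.choose m : ℝ) * ((1 - 1/k) * (1 - x)) :=
            mul_le_mul_of_nonneg_right ihl hc0

/-- For integers `m > 0`, `i ≥ 0` and real `k > 1` with `km` an
integer `K` and `i ≤ km − m`:
`binom(K−i, m)/binom(K, m) ≤ (1 − 1/k)^i` and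
`binom(K−i, m)/binom(K, m) ≥ (1 − 1/k)^i · (1 − i(i−1)/(2(k−1)(km − i)))`. -/
theorem stmt6 (m i K : ℕ) (k : ℝ)
    (hm : 0 < m) (hk : 1 < k)
    (hK : (K : ℝ) = k * m)
    (hi : (i : ℝ) ≤ k * m - m) :
    ((K - i).choose m : ℝ) / (K.choose m : ℝ) ≤ (1 - 1 / k) ^ i ∧
    (1 - 1 / k) ^ i * (1 - (i : ℝ) * (i - 1) / (2 * (k - 1) * (k * m - i))) ≤
      ((K - i).choose m : ℝ) / (K.choose m : ℝ) := by
  have hk0 : (0:ℝ) < k := lt_trans one_pos hk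
  have hk1 : (0:ℝ) < k - 1 := by linarith
  have h1k : (0:ℝ) ≤ 1 - 1/k := by
    rw [sub_nonneg, div_le_one hk0]; linarith
  have him : i + m ≤ K := by
    have : (i:ℝ) + m ≤ K := by rw [hK]; linarith
    exact_mod_cast this
  have hmr : (0:ℝ) < m := by exact_mod_cast hm
  have hir : (i:ℝ) + m ≤ K := by exact_mod_cast him
  have hKi : (0:ℝ) < (K:ℝ) - i := by linarith
  obtain ⟨hu, hl⟩ := stmt6_aux m K k hm hk hK i him
  refine ⟨hu, le_trans ?_ hl⟩
  apply mul_le_mul_of_nonneg_left _ (pow_nonneg h1k i)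
  apply sub_le_sub_left
  -- ∑ j < i, j/((k-1)(K-j)) ≤ i(i-1)/(2(k-1)(km-i))
  have hsum : ∑ j ∈ Finset.range i, (j : ℝ) / ((k - 1) * ((K : ℝ) - j))
      ≤ ∑ j ∈ Finset.range i, (j : ℝ) / ((k - 1) * ((K : ℝ) - i)) := by
    apply Finset.sum_le_sum
    intro j hj
    have hj' : (j:ℝ) ≤ i := by exact_mod_cast le_of_lt (Finset.mem_range.mp hj)
    rcases Nat.eq_zero_or_pos j with h0 | h0
    · simp [h0]
    · apply div_le_div_of_nonneg_left (Nat.cast_nonneg _) (mul_pos hk1 hKi)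
      apply mul_le_mul_of_nonneg_left _ (le_of_lt hk1)
      linarith
  refine le_trans hsum ?_
  rw [← Finset.sum_div]
  have hgauss : (∑ j ∈ Finset.range i, (j : ℝ)) = (i : ℝ) * ((i : ℝ) - 1) / 2 := by
    rcases Nat.eq_zero_or_pos i with h0 | h0
    · simp [h0]
    · have := Finset.sum_range_id_mul_two i
      have := congrArg (Nat.cast : ℕ → ℝ) this
      push_cast [Nat.cast_sub h0] at this
      linarith
  rw [hgauss, hK]
  have hki' : (0:ℝ) < k * m - i := by rw [← hK]; exact hKi
  rw [div_le_div_iff₀ (mul_pos hk1 hki') (by positivity)]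
  nlinarith [mul_nonneg (Nat.cast_nonneg (α := ℝ) i) (mul_nonneg (le_of_lt hk1) (le_of_lt hki'))]
end

section
/- For fixed δ ∈ (0,1], the Size-Expansion Function f_δ(k), defined as the optimal value of the LP: minimize (1/k)Σ_{i≥1} β_i subject to Σ_{i≥1} i·β_i = k, Σ_{i≥1} (1 − (1−1/k)^i)·β_i ≥ δ, and β_i ≥ 0 for all i, is a non-increasing function of k on (1, ∞). -/
/-- A sequence `β : ℕ →₀ ℝ` (finitely supported) is feasible for the LP defining the
Size-Expansion Function `f_δ(k)`: all `β i ≥ 0`, indexed by `i ≥ 1`,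
`Σ i·β_i = k` and `Σ (1 − (1−1/k)^i)·β_i ≥ δ`. -/
def SEFeasible (δ k : ℝ) (β : ℕ →₀ ℝ) : Prop :=
  (∀ i, 0 ≤ β i) ∧ β 0 = 0 ∧
    (β.sum fun i b => (i : ℝ) * b) = k ∧
    δ ≤ (β.sum fun i b => (1 - (1 - 1 / k) ^ i) * b)

/-- The Size-Expansion Function `f_δ(k)`: the infimum of `(1/k)·Σ β_i` over
feasible sequences. -/
noncomputable def sizeExpansionFun (δ k : ℝ) : ℝ :=
  sInf {y : ℝ | ∃ β : ℕ →₀ ℝ, SEFeasible δ k β ∧ y = (1 / k) * (β.sum fun _ b => b)}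


lemma key_ineq (k k' : ℝ) (hk : 1 < k) (hkk : k ≤ k') (i : ℕ) :
    k * (1 - (1 - 1/k)^i) ≤ k' * (1 - (1 - 1/k')^i) := by
  have hk' : 1 < k' := hk.trans_le hkk
  have hkpos : 0 < k := lt_trans one_pos hk
  have hk'pos : 0 < k' := lt_trans one_pos hk'
  have hx0 : 0 ≤ 1 - 1/k := by
    have : 1/k ≤ 1 := by rw [div_le_one hkpos]; linarith
    linarith
  have hxy : 1 - 1/k ≤ 1 - 1/k' := by
    have := one_div_le_one_div_of_le hkpos hkk
    linarith
  have g1 : (∑ j ∈ Finset.range i, (1 - 1/k)^j) * ((1 - 1/k) - 1) = (1 - 1/k)^i - 1 :=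
    geom_sum_mul _ _
  have g2 : (∑ j ∈ Finset.range i, (1 - 1/k')^j) * ((1 - 1/k') - 1) = (1 - 1/k')^i - 1 :=
    geom_sum_mul _ _
  have e1 : k * (1 - (1 - 1/k)^i) = ∑ j ∈ Finset.range i, (1 - 1/k)^j := by
    have hkne : k ≠ 0 := ne_of_gt hkpos
    field_simp at g1 ⊢
    nlinarith [g1]
  have e2 : k' * (1 - (1 - 1/k')^i) = ∑ j ∈ Finset.range i, (1 - 1/k')^j := by
    have hkne : k' ≠ 0 := ne_of_gt hk'pos
    field_simp at g2 ⊢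
    nlinarith [g2]
  rw [e1, e2]
  exact Finset.sum_le_sum fun j _ => pow_le_pow_left₀ hx0 hxy j

/-- For `δ ∈ (0,1]`, the Size-Expansion Function is non-increasing
in `k` on `(1, ∞)`. -/
theorem stmt8 (δ : ℝ) (hδ0 : 0 < δ) (hδ1 : δ ≤ 1) :
    ∀ k k' : ℝ, 1 < k → k ≤ k' → sizeExpansionFun δ k' ≤ sizeExpansionFun δ k := by
  intro k k' hk hkk
  have hk' : 1 < k' := hk.trans_le hkk
  have hkpos : 0 < k := lt_trans one_pos hk
  have hk'pos : 0 < k' := lt_trans one_pos hk'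
  have hkne : k ≠ 0 := ne_of_gt hkpos
  have hk'ne : k' ≠ 0 := ne_of_gt hk'pos
  have hcpos : 0 < k'/k := div_pos hk'pos hkpos
  apply csInf_le_csInf
  · -- BddBelow
    refine ⟨0, ?_⟩
    rintro y ⟨β, ⟨hpos, -, -, -⟩, rfl⟩
    have hs : 0 ≤ β.sum fun _ b => b :=
      Finset.sum_nonneg fun i _ => hpos i
    positivity
  · -- nonempty: single 1 k is feasible for k
    refine ⟨1, Finsupp.single 1 k, ⟨?_, ?_, ?_, ?_⟩, ?_⟩
    · intro i
      rcases eq_or_ne i 1 with rfl | h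
      · simp [Finsupp.single_eq_same]; linarith
      · simp [Finsupp.single_eq_of_ne' (Ne.symm h)]
    · simp [Finsupp.single_eq_of_ne]
    · rw [Finsupp.sum_single_index (by simp)]; simp
    · rw [Finsupp.sum_single_index (by simp)]
      simp only [pow_one]
      have : (1 - (1 - 1/k)) * k = 1 := by field_simp; ring
      linarith
    · rw [Finsupp.sum_single_index (by simp)]
      field_simp
  · -- subset
    rintro y ⟨β, ⟨hpos, h0, hsum, hcon⟩, rfl⟩
    refine ⟨(k'/k) • β, ⟨?_, ?_, ?_, ?_⟩, ?_⟩
    · intro i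
      have : ((k'/k) • β) i = (k'/k) * β i := rfl
      rw [this]
      exact mul_nonneg hcpos.le (hpos i)
    · show (k'/k) * β 0 = 0
      rw [h0, mul_zero]
    · rw [Finsupp.sum_smul_index (fun i => by rw [mul_zero])]
      have : (β.sum fun i b => (i : ℝ) * ((k'/k) * b)) = (k'/k) * β.sum fun i b => (i:ℝ) * b := by
        rw [Finsupp.mul_sum]; apply Finsupp.sum_congr; intro i _; ring
      rw [this, hsum]
      field_simp
    · rw [Finsupp.sum_smul_index (fun i => by rw [mul_zero])]
      refine le_trans hcon ?_
      apply Finset.sum_le_sum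
      intro i _
      have hkey := key_ineq k k' hk hkk i
      have h1 : k * (1 - (1 - 1/k)^i) * β i ≤ k' * (1 - (1 - 1/k')^i) * β i :=
        mul_le_mul_of_nonneg_right hkey (hpos i)
      have h2 : (1 - (1 - 1/k)^i) * β i ≤ (1 - (1 - 1/k')^i) * ((k'/k) * β i) := by
        rw [← mul_le_mul_iff_right₀ hkpos]
        calc k * ((1 - (1 - 1/k)^i) * β i) = k * (1 - (1 - 1/k)^i) * β i := by ring
          _ ≤ k' * (1 - (1 - 1/k')^i) * β i := h1
          _ = k * ((1 - (1 - 1/k')^i) * (k'/k * β i)) := by field_simp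
      exact h2
    · rw [Finsupp.sum_smul_index (fun i => rfl)]
      have : (β.sum fun _ b => (k'/k) * b) = (k'/k) * β.sum fun _ b => b := by
        rw [Finsupp.mul_sum]
      rw [this]
      field_simp
end

section
/- For fixed δ ∈ (0,1], k > 1, and integer d ≥ 1, let f_{d,δ}(k) denote the optimal value of the LP: minimize (1/k)Σ_{i=1}^{d} β_i subject to Σ_{i=1}^{d} i·β_i = k, Σ_{i=1}^{d} (1 − (1−1/k)^i)·β_i ≥ δ, β_i ≥ 0, and let f_δ(k) be the same LP with the index range extended to all i ≥ 1. Then f_{d,δ}(k) = max{ f_δ(k), 1/d } (whenever the LP defining f_{d,δ}(k) is feasible). -/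
/-- Feasibility for the degree-dependent LP: additionally the support lies in `[1, d]`. -/
def SEFeasibleDeg (d : ℕ) (δ k : ℝ) (β : ℕ →₀ ℝ) : Prop :=
  SEFeasible δ k β ∧ ∀ i, d < i → β i = 0

/-- The Degree-Dependent Size-Expansion Function `f_{d,δ}(k)`. -/
noncomputable def sizeExpansionFunDeg (d : ℕ) (δ k : ℝ) : ℝ :=
  sInf {y : ℝ | ∃ β : ℕ →₀ ℝ, SEFeasibleDeg d δ k β ∧ y = (1 / k) * (β.sum fun _ b => b)}

/- ### Auxiliary lemmas -/

/-- Bernoulli-type chord inequality: for `0 < q < 1`, the secant line of `x ↦ 1 - q^x`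
through the integer points `m`, `m+1` lies above all values `1 - q^n`. -/
private lemma chord_ineq (q : ℝ) (hq0 : 0 < q) (hq1 : q < 1) (m n : ℕ) :
    1 - q ^ n ≤ (1 - q ^ m) + q ^ m * (1 - q) * ((n : ℝ) - m) := by
  rcases le_or_gt m n with h | h
  · obtain ⟨t, rfl⟩ := Nat.exists_eq_add_of_le h
    have hb : 1 + (t : ℝ) * (q - 1) ≤ q ^ t := by
      have := one_add_mul_le_pow (a := q - 1) (by linarith) t
      simpa using this
    have hqm : (0:ℝ) < q ^ m := pow_pos hq0 m
    have h2 : q ^ m * (1 + (t:ℝ) * (q-1)) ≤ q ^ m * q ^ t :=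
      mul_le_mul_of_nonneg_left hb hqm.le
    rw [pow_add]
    push_cast
    nlinarith
  · obtain ⟨s, rfl⟩ := Nat.exists_eq_add_of_le h.le
    have hqn : (0:ℝ) < q ^ n := pow_pos hq0 n
    have hqs : (0:ℝ) < q ^ s := pow_pos hq0 s
    have hb : 1 + (s : ℝ) * (1/q - 1) ≤ (1/q) ^ s := by
      have := one_add_mul_le_pow (a := 1/q - 1) (by nlinarith [one_div_pos.mpr hq0]) s
      simpa using this
    have hinv : (1/q:ℝ) ^ s = 1 / q ^ s := by
      rw [div_pow]; simp
    have key : q ^ s * (1 + (s:ℝ) * (1 - q)) ≤ 1 := by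
      have h1 : 1 + (s:ℝ)*(1-q) ≤ 1 + (s:ℝ)*(1/q - 1) := by
        have : (1-q:ℝ) ≤ 1/q - 1 := by
          rw [div_sub' (ne_of_gt hq0), le_div_iff₀ hq0]; nlinarith
        nlinarith [Nat.cast_nonneg (α := ℝ) s]
      have h2 : q ^ s * (1 + (s:ℝ)*(1/q-1)) ≤ q ^ s * (1/q)^s :=
        mul_le_mul_of_nonneg_left hb hqs.le
      have h3 : q ^ s * (1/q)^s = 1 := by
        rw [hinv]; field_simp
      nlinarith
    rw [pow_add]
    push_cast
    nlinarith

private lemma linsum (β : ℕ →₀ ℝ) (A B : ℝ) :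
    (β.sum fun i b => (A + B * (i:ℝ)) * b)
      = A * (β.sum fun _ b => b) + B * (β.sum fun i b => (i:ℝ) * b) := by
  simp only [Finsupp.sum, Finset.mul_sum, ← Finset.sum_add_distrib]
  exact Finset.sum_congr rfl fun i _ => by ring

private lemma feas_S_nonneg (β : ℕ →₀ ℝ) (h : ∀ i, 0 ≤ β i) :
    0 ≤ β.sum fun _ b => b :=
  Finset.sum_nonneg fun i _ => h i

private lemma feas_S_le_k {δ k : ℝ} {β : ℕ →₀ ℝ} (hf : SEFeasible δ k β) :
    (β.sum fun _ b => b) ≤ k := by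
  obtain ⟨hpos, h0, hsum, _⟩ := hf
  rw [← hsum]
  apply Finset.sum_le_sum
  intro i hi
  have hi0 : i ≠ 0 := by
    rintro rfl; exact (Finsupp.mem_support_iff.mp hi) h0
  have : (1:ℝ) ≤ i := by exact_mod_cast Nat.one_le_iff_ne_zero.mpr hi0
  dsimp only
  nlinarith [hpos i]

private lemma feas_delta_le_S {δ k : ℝ} {β : ℕ →₀ ℝ} (hk : 1 < k)
    (hf : SEFeasible δ k β) : δ ≤ β.sum fun _ b => b := by
  obtain ⟨hpos, h0, hsum, hexp⟩ := hf
  refine hexp.trans (Finset.sum_le_sum fun i _ => ?_)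
  have h01 : (0:ℝ) < 1 - 1/k := by
    have : 1/k < 1 := by rw [div_lt_one (by linarith)]; linarith
    linarith
  have hq : (0:ℝ) ≤ (1 - 1/k) ^ i := pow_nonneg h01.le i
  dsimp only
  nlinarith [hpos i]

/-- The expansion constraint, bounded above by the chord line through `m`, `m+1`. -/
private lemma expansion_le {δ k : ℝ} {β : ℕ →₀ ℝ} (hk : 1 < k)
    (hf : SEFeasible δ k β) (m : ℕ) :
    δ ≤ ((1 - (1-1/k)^m) - (1-1/k)^m * (1/k) * m) * (β.sum fun _ b => b)
        + (1-1/k)^m * (1/k) * k := by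
  obtain ⟨hpos, h0, hsum, hexp⟩ := hf
  have hk0 : (0:ℝ) < k := by linarith
  have hq0 : (0:ℝ) < 1 - 1/k := by
    have : 1/k < 1 := by rw [div_lt_one hk0]; linarith
    linarith
  have hq1 : 1 - 1/k < 1 := by
    have : (0:ℝ) < 1/k := by positivity
    linarith
  set A := (1 - (1-1/k)^m) - (1-1/k)^m * (1/k) * m with hA
  set B := (1-1/k)^m * (1/k) with hB
  have step : (β.sum fun i b => (1 - (1 - 1 / k) ^ i) * b)
      ≤ β.sum fun i b => (A + B * (i:ℝ)) * b := by
    apply Finset.sum_le_sum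
    intro i _
    dsimp only
    have hch := chord_ineq (1-1/k) hq0 hq1 m i
    have h1q : 1 - (1 - 1/k) = 1/k := by ring
    rw [h1q] at hch
    have hub : 1 - (1 - 1/k)^i ≤ A + B * (i:ℝ) := by
      rw [hA, hB]; nlinarith
    exact mul_le_mul_of_nonneg_right hub (hpos i)
  calc δ ≤ _ := hexp
    _ ≤ β.sum fun i b => (A + B * (i:ℝ)) * b := step
    _ = A * (β.sum fun _ b => b) + B * (β.sum fun i b => (i:ℝ)*b) := linsum β A B
    _ = A * (β.sum fun _ b => b) + B * k := by rw [hsum]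

set_option maxHeartbeats 1600000 in
theorem stmt9 (d : ℕ) (δ k : ℝ) (hd : 1 ≤ d) (hδ0 : 0 < δ) (hδ1 : δ ≤ 1) (hk : 1 < k)
    (hfeas : ∃ β : ℕ →₀ ℝ, SEFeasibleDeg d δ k β) :
    sizeExpansionFunDeg d δ k = max (sizeExpansionFun δ k) (1 / d) := by
  have hk0 : (0:ℝ) < k := by linarith
  have hq0 : (0:ℝ) < 1 - 1/k := by
    have : 1/k < 1 := by rw [div_lt_one hk0]; linarith
    linarith
  have hq1 : 1 - 1/k < 1 := by
    have : (0:ℝ) < 1/k := by positivity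
    linarith
  have hd0 : (0:ℝ) < (d:ℝ) := by exact_mod_cast Nat.lt_of_lt_of_le Nat.zero_lt_one hd
  set Sinf := {y : ℝ | ∃ β : ℕ →₀ ℝ, SEFeasible δ k β ∧ y = (1 / k) * (β.sum fun _ b => b)}
    with hSinf
  set Sdeg := {y : ℝ | ∃ β : ℕ →₀ ℝ, SEFeasibleDeg d δ k β ∧ y = (1 / k) * (β.sum fun _ b => b)}
    with hSdeg
  have hgoal : sizeExpansionFunDeg d δ k = sInf Sdeg := rfl
  have hgoal2 : sizeExpansionFun δ k = sInf Sinf := rfl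
  have hbdd_inf : BddBelow Sinf := by
    refine ⟨0, fun y hy => ?_⟩
    obtain ⟨β, hβ, rfl⟩ := hy
    exact mul_nonneg (by positivity) (feas_S_nonneg β hβ.1)
  have hbdd_deg : BddBelow Sdeg := by
    refine ⟨0, fun y hy => ?_⟩
    obtain ⟨β, hβ, rfl⟩ := hy
    exact mul_nonneg (by positivity) (feas_S_nonneg β hβ.1.1)
  obtain ⟨β₀, hβ₀⟩ := hfeas
  have hne_deg : Sdeg.Nonempty := ⟨_, β₀, hβ₀, rfl⟩
  have hne_inf : Sinf.Nonempty := ⟨_, β₀, hβ₀.1, rfl⟩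
  -- every element of Sdeg is ≥ max
  have hlb : ∀ y ∈ Sdeg, max (sInf Sinf) (1/(d:ℝ)) ≤ y := by
    intro y hy
    obtain ⟨β, hβ, rfl⟩ := hy
    refine max_le (csInf_le hbdd_inf ⟨β, hβ.1, rfl⟩) ?_
    -- 1/d ≤ (1/k) * S  since k = Σ i βᵢ ≤ d Σ βᵢ
    have hkd : k ≤ (d:ℝ) * (β.sum fun _ b => b) := by
      rw [← hβ.1.2.2.1, Finsupp.sum, Finsupp.sum, Finset.mul_sum]
      apply Finset.sum_le_sum
      intro i hi
      have hid : i ≤ d := by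
        by_contra hcon
        exact (Finsupp.mem_support_iff.mp hi) (hβ.2 i (by omega))
      have : (i:ℝ) ≤ d := by exact_mod_cast hid
      nlinarith [hβ.1.1 i]
    rw [one_div_mul_eq_div, div_le_div_iff₀ hd0 hk0]
    linarith
  rw [hgoal, hgoal2]
  rcases le_or_gt (sInf Sinf) (1/(d:ℝ)) with hA | hB
  · -- Case A : f_δ ≤ 1/d ; then f_{d,δ} = 1/d and the point mass at d is feasible
    rw [max_eq_right hA]
    have h1q : 1 - (1 - 1/k) = 1/k := by ring
    set a := (1-1/k)^d * (1/k) with ha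
    set A := (1 - (1-1/k)^d) - a * d with hAdef
    have hA0 : 0 ≤ A := by
      have hchord0 := chord_ineq (1-1/k) hq0 hq1 d 0
      rw [h1q] at hchord0
      rw [hAdef, ha]
      simp only [pow_zero, Nat.cast_zero] at hchord0 ⊢
      nlinarith
    have hclaim : δ ≤ (1 - (1-1/k)^d) * (k/(d:ℝ)) := by
      refine le_of_forall_pos_le_add fun ε hε => ?_
      have hAk1 : (0:ℝ) < A*k + 1 := by nlinarith
      set ε' := ε / (A*k+1) with hε'def
      have hε'0 : 0 < ε' := by positivity
      obtain ⟨y, hy, hylt⟩ := exists_lt_of_csInf_lt hne_inf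
        (lt_of_le_of_lt hA (by linarith : 1/(d:ℝ) < 1/(d:ℝ) + ε'))
      obtain ⟨β, hβ, rfl⟩ := hy
      have hexp := expansion_le hk hβ d
      set S := β.sum fun _ b => b with hSdef
      have hS0 : 0 ≤ S := feas_S_nonneg β hβ.1
      have hSlt : S < k/(d:ℝ) + k*ε' := by
        rw [one_div_mul_eq_div, div_lt_iff₀ hk0] at hylt
        have : (1/(d:ℝ) + ε') * k = k/(d:ℝ) + k*ε' := by ring
        linarith [hylt.trans_eq this]
      have hexp' : δ ≤ A * S + a * k := by rw [hAdef, ha]; exact hexp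
      have hAkε : A * k * ε' ≤ ε := by
        rw [hε'def]
        calc A * k * (ε/(A*k+1)) ≤ (A*k+1) * (ε/(A*k+1)) := by
              apply mul_le_mul_of_nonneg_right (by linarith) (by positivity)
          _ = ε := by field_simp
      have hiden : A*(k/(d:ℝ)) + a*k = (1 - (1-1/k)^d) * (k/(d:ℝ)) := by
        rw [hAdef]
        field_simp
        ring
      have h1 : A * S ≤ A * (k/(d:ℝ) + k*ε') := mul_le_mul_of_nonneg_left hSlt.le hA0
      have h2 : A*(k/(d:ℝ) + k*ε') = A*(k/(d:ℝ)) + A*k*ε' := by ring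
      clear_value A a ε' S
      linarith [hexp', h1, h2, hiden, hAkε]
    apply le_antisymm
    · apply csInf_le hbdd_deg
      refine ⟨Finsupp.single d (k/(d:ℝ)), ⟨⟨?_, ?_, ?_, ?_⟩, ?_⟩, ?_⟩
      · intro i
        rw [Finsupp.single_apply]
        split
        · positivity
        · exact le_refl 0
      · exact Finsupp.single_eq_of_ne (by omega)
      · rw [Finsupp.sum_single_index (by simp)]
        field_simp
      · rw [Finsupp.sum_single_index (by simp)]
        exact hclaim
      · intro i hi
        exact Finsupp.single_eq_of_ne (by omega)
      · rw [Finsupp.sum_single_index rfl]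
        field_simp
    · exact le_csInf hne_deg fun y hy => le_trans (le_max_right _ _) (hlb y hy)
  · -- Case B : 1/d < f_δ ; then f_{d,δ} = f_δ
    rw [max_eq_left hB.le]
    apply le_antisymm
    · refine le_of_forall_pos_le_add fun ε hε => ?_
      obtain ⟨y, hy, hylt⟩ := exists_lt_of_csInf_lt hne_inf (lt_add_of_pos_right _ hε)
      have hfy : sInf Sinf ≤ y := csInf_le hbdd_inf hy
      obtain ⟨β, hβ, hyval⟩ := hy
      set S := β.sum fun _ b => b with hSdef
      have hS0 : 0 < S := lt_of_lt_of_le hδ0 (feas_delta_le_S hk hβ)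
      have hSk : S ≤ k := feas_S_le_k hβ
      have hSd : k/(d:ℝ) < S := by
        have h1 : 1/(d:ℝ) < 1/k * S := hyval ▸ lt_of_lt_of_le hB hfy
        rw [one_div_mul_eq_div, div_lt_div_iff₀ hd0 hk0] at h1
        rw [div_lt_iff₀ hd0]
        linarith
      set μ := k / S with hμdef
      have hSμ : S * μ = k := by rw [hμdef]; field_simp
      have hμ1 : 1 ≤ μ := (one_le_div hS0).mpr hSk
      have hμd : μ < d := by
        rw [hμdef, div_lt_iff₀ hS0]
        rw [div_lt_iff₀ hd0] at hSd
        linarith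
      set m := ⌊μ⌋₊ with hmdef
      have hmle : (m:ℝ) ≤ μ := Nat.floor_le (by positivity)
      have hmlt : μ < m + 1 := Nat.lt_floor_add_one μ
      have hm1 : 1 ≤ m := Nat.le_floor (by exact_mod_cast hμ1)
      have hmd : m + 1 ≤ d := by
        have h1 : (m:ℝ) < d := lt_of_le_of_lt hmle hμd
        have h2 : m < d := by exact_mod_cast h1
        omega
      set x1 := S * ((m:ℝ) + 1 - μ) with hx1
      set x2 := S * (μ - m) with hx2
      have hx10 : 0 ≤ x1 := by rw [hx1]; nlinarith
      have hx20 : 0 ≤ x2 := by rw [hx2]; nlinarith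
      clear_value S μ m x1 x2
      set γ := Finsupp.single m x1 + Finsupp.single (m+1) x2 with hγ
      have hsum1 : (γ.sum fun _ b => b) = S := by
        rw [hγ, Finsupp.sum_add_index' (fun _ => rfl) (fun _ _ _ => rfl),
            Finsupp.sum_single_index rfl, Finsupp.sum_single_index rfl, hx1, hx2]
        ring
      have hsum2 : (γ.sum fun i b => (i:ℝ) * b) = k := by
        rw [hγ, Finsupp.sum_add_index' (fun i => by simp) (fun i b1 b2 => by ring),
            Finsupp.sum_single_index (by simp), Finsupp.sum_single_index (by simp),
            hx1, hx2]
        push_cast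
        linear_combination hSμ
      have hsum3 : δ ≤ γ.sum fun i b => (1 - (1-1/k)^i) * b := by
        have hexp := expansion_le hk hβ m
        rw [← hSdef] at hexp
        rw [hγ, Finsupp.sum_add_index' (fun i => by simp) (fun i b1 b2 => by ring),
            Finsupp.sum_single_index (by simp), Finsupp.sum_single_index (by simp)]
        have heq : ((1 - (1-1/k)^m) - (1-1/k)^m * (1/k) * m) * S + (1-1/k)^m * (1/k) * k
            = (1 - (1-1/k)^m) * x1 + (1 - (1-1/k)^(m+1)) * x2 := by
          rw [hx1, hx2, pow_succ]
          linear_combination (-((1-1/k)^m * (1/k))) * hSμ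
        linarith [hexp, heq]
      have hsingle_nonneg : ∀ (j i : ℕ) (v : ℝ), 0 ≤ v → 0 ≤ Finsupp.single j v i := by
        intro j i v hv
        rw [Finsupp.single_apply]
        split
        · exact hv
        · exact le_refl 0
      have hγfeas : SEFeasibleDeg d δ k γ := by
        refine ⟨⟨?_, ?_, hsum2, hsum3⟩, ?_⟩
        · intro i
          rw [hγ, Finsupp.add_apply]
          exact add_nonneg (hsingle_nonneg m i x1 hx10) (hsingle_nonneg (m+1) i x2 hx20)
        · rw [hγ, Finsupp.add_apply, Finsupp.single_eq_of_ne (by omega : 0 ≠ m),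
              Finsupp.single_eq_of_ne (by omega : 0 ≠ m+1)]
          norm_num
        · intro i hi
          rw [hγ, Finsupp.add_apply, Finsupp.single_eq_of_ne (by omega : i ≠ m),
              Finsupp.single_eq_of_ne (by omega : i ≠ m+1)]
          norm_num
      have hymem : y ∈ Sdeg := ⟨γ, hγfeas, by rw [hsum1, hyval]⟩
      calc sInf Sdeg ≤ y := csInf_le hbdd_deg hymem
        _ ≤ sInf Sinf + ε := hylt.le
    · exact le_csInf hne_deg fun y hy => le_trans (le_max_left _ _) (hlb y hy)
end

section
/- For fixed δ ∈ (0,1], the optimal solution of the LP defining the Size-Expansion Function f_δ(k) can always be chosen to be supported on at most two adjacent indices; i.e., there exists an optimal (β_i) and an integer j ≥ 1 with β_i = 0 for all i ∉ {j, j+1}. -/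
lemma bern_aux (k : ℝ) (hk : 1 < k) (m : ℕ) :
    (1 - 1/k)^m * (1 + (m:ℝ)/k) ≤ 1 := by
  have hk0 : (0:ℝ) < k := by linarith
  have hk1 : (0:ℝ) < k - 1 := by linarith
  have hc0 : (0:ℝ) < 1 - 1/k := by
    have : 1/k < 1 := by rw [div_lt_one hk0]; linarith
    linarith
  have h1 : (m:ℝ)/k ≤ (m:ℝ)/(k-1) := by
    apply div_le_div_of_nonneg_left (by positivity) hk1 (by linarith)
  have h2 : (1:ℝ) + (m:ℝ)*(1/(k-1)) ≤ (1 + 1/(k-1))^m :=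
    one_add_mul_le_pow (le_trans (by norm_num) (by positivity : (0:ℝ) ≤ 1/(k-1))) m
  have h3 : (1 - 1/k)^m * (1 + (m:ℝ)/k) ≤ (1 - 1/k)^m * (1 + 1/(k-1))^m := by
    apply mul_le_mul_of_nonneg_left _ (by positivity)
    calc 1 + (m:ℝ)/k ≤ 1 + (m:ℝ)/(k-1) := by linarith
      _ ≤ (1 + 1/(k-1))^m := by rw [div_eq_mul_one_div]; exact h2
  calc (1 - 1/k)^m * (1 + (m:ℝ)/k) ≤ (1 - 1/k)^m * (1 + 1/(k-1))^m := h3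
    _ = ((1 - 1/k) * (1 + 1/(k-1)))^m := (mul_pow _ _ _).symm
    _ = 1 := by
        rw [show (1 - 1/k) * (1 + 1/(k-1)) = 1 by field_simp; ring]
        simp

lemma bern_strict (k : ℝ) (hk : 1 < k) (j : ℕ) (hj : 1 ≤ j) :
    (1 - 1/k)^j * (1 + (j:ℝ)/k) < 1 := by
  have hk0 : (0:ℝ) < k := by linarith
  have hk1 : (0:ℝ) < k - 1 := by linarith
  have hc0 : (0:ℝ) < 1 - 1/k := by
    have : 1/k < 1 := by rw [div_lt_one hk0]; linarith
    linarith
  have hj0 : (0:ℝ) < (j:ℝ) := by exact_mod_cast hj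
  have h1 : (j:ℝ)/k < (j:ℝ)/(k-1) := by
    apply div_lt_div_of_pos_left hj0 hk1 (by linarith)
  have h2 : (1:ℝ) + (j:ℝ)*(1/(k-1)) ≤ (1 + 1/(k-1))^j :=
    one_add_mul_le_pow (le_trans (by norm_num) (by positivity : (0:ℝ) ≤ 1/(k-1))) j
  have h3 : (1 - 1/k)^j * (1 + (j:ℝ)/k) < (1 - 1/k)^j * (1 + 1/(k-1))^j := by
    apply mul_lt_mul_of_pos_left _ (by positivity)
    calc 1 + (j:ℝ)/k < 1 + (j:ℝ)/(k-1) := by linarith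
      _ ≤ (1 + 1/(k-1))^j := by rw [div_eq_mul_one_div]; exact h2
  calc (1 - 1/k)^j * (1 + (j:ℝ)/k) < (1 - 1/k)^j * (1 + 1/(k-1))^j := h3
    _ = ((1 - 1/k) * (1 + 1/(k-1)))^j := (mul_pow _ _ _).symm
    _ = 1 := by
        rw [show (1 - 1/k) * (1 + 1/(k-1)) = 1 by field_simp; ring]
        simp

lemma bern (k : ℝ) (hk : 1 < k) (i j : ℕ) :
    (1 - 1/k)^j * (1 + ((j:ℝ) - i)/k) ≤ (1 - 1/k)^i := by
  have hk0 : (0:ℝ) < k := by linarith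
  have hc0 : (0:ℝ) < 1 - 1/k := by
    have : 1/k < 1 := by rw [div_lt_one hk0]; linarith
    linarith
  rcases le_or_gt j i with h | h
  · obtain ⟨m, rfl⟩ := Nat.exists_eq_add_of_le h
    have hb : (1:ℝ) + (m:ℝ)*(-(1/k)) ≤ (1 + (-(1/k)))^m := by
      apply one_add_mul_le_pow
      have : 1/k < 1 := by rw [div_lt_one hk0]; linarith
      linarith
    have : (1 - 1/k)^(j+m) = (1 - 1/k)^j * (1-1/k)^m := pow_add _ _ _
    rw [this]
    have he : ((j:ℝ) - (j+m:ℕ))/k = (m:ℝ)*(-(1/k)) := by push_cast; ring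
    rw [he]
    apply mul_le_mul_of_nonneg_left _ (by positivity)
    calc (1:ℝ) + (m:ℝ)*(-(1/k)) ≤ (1 + (-(1/k)))^m := hb
      _ = (1 - 1/k)^m := by ring_nf
  · obtain ⟨m, rfl⟩ := Nat.exists_eq_add_of_le h.le
    have hb := bern_aux k hk m
    have : (1 - 1/k)^(i+m) = (1 - 1/k)^i * (1-1/k)^m := pow_add _ _ _
    rw [this]
    have he : (((i+m:ℕ):ℝ) - i)/k = (m:ℝ)/k := by push_cast; ring
    rw [he, mul_assoc]
    calc (1-1/k)^i * ((1-1/k)^m * (1 + (m:ℝ)/k)) ≤ (1-1/k)^i * 1 :=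
          mul_le_mul_of_nonneg_left hb (by positivity)
      _ = (1-1/k)^i := mul_one _

lemma sum_two (j : ℕ) (a b : ℝ) (e : ℕ → ℝ) :
    ((Finsupp.single j a + Finsupp.single (j+1) b).sum fun i x => e i * x)
      = e j * a + e (j+1) * b := by
  rw [Finsupp.sum_add_index' (by simp) (fun i b₁ b₂ => by ring),
      Finsupp.sum_single_index (by simp), Finsupp.sum_single_index (by simp)]


/-- The LP defining `f_δ(k)` has an optimal solution supported on at
most two adjacent indices `{j, j+1}`. -/
theorem stmt11 (δ k : ℝ) (hδ0 : 0 < δ) (hδ1 : δ ≤ 1) (hk : 1 < k) :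
    ∃ β : ℕ →₀ ℝ, SEFeasible δ k β ∧
      (1 / k) * (β.sum fun _ b => b) = sizeExpansionFun δ k ∧
      ∃ j : ℕ, 1 ≤ j ∧ ∀ i, i ≠ j → i ≠ j + 1 → β i = 0 := by
  have hk0 : (0:ℝ) < k := by linarith
  have hkne : k ≠ 0 := hk0.ne'
  set c : ℝ := 1 - 1/k with hc
  have hc0 : (0:ℝ) < c := by
    have : 1/k < 1 := by rw [div_lt_one hk0]; linarith
    simp only [hc]; linarith
  have hc1 : c < 1 := by
    have : 0 < 1/k := by positivity
    simp only [hc]; linarith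
  -- existence of n with k(1-c^(n+1)) < (n+1)δ
  have hex : ∃ n : ℕ, k * (1 - c^(n+1)) < ((n:ℝ)+1) * δ := by
    obtain ⟨n, hn⟩ := exists_nat_gt (k/δ)
    refine ⟨n, ?_⟩
    have h1 : k * (1 - c^(n+1)) < k := by nlinarith [pow_pos hc0 (n+1)]
    have h2 : k < ((n:ℝ)+1) * δ := by
      rw [div_lt_iff₀ hδ0] at hn; nlinarith
    linarith
  set j := Nat.find hex with hjdef
  have hQj : k * (1 - c^(j+1)) < ((j:ℝ)+1) * δ := Nat.find_spec hex
  have hj1 : 1 ≤ j := by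
    by_contra h
    have hj0 : j = 0 := by omega
    rw [hj0] at hQj
    simp only [Nat.cast_zero, zero_add, one_mul, pow_one] at hQj
    have : k * (1 - c) = 1 := by rw [hc]; field_simp; ring
    linarith
  have hNj : (j:ℝ) * δ ≤ k * (1 - c^j) := by
    have h := Nat.find_min hex (show j - 1 < j by omega)
    push_neg at h
    have hj' : j - 1 + 1 = j := by omega
    rw [hj'] at h
    have : ((j-1:ℕ):ℝ) + 1 = (j:ℝ) := by
      have : ((j-1:ℕ):ℝ) = (j:ℝ) - 1 := by
        push_cast [Nat.cast_sub hj1]; ring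
      linarith
    linarith [this ▸ h]
  clear_value j
  -- D > 0
  set D : ℝ := 1 - c^j - (j:ℝ)*c^j/k with hD
  have hDpos : 0 < D := by
    have := bern_strict k hk j hj1
    have hexp : c^j * (1 + (j:ℝ)/k) = c^j + (j:ℝ)*c^j/k := by ring
    simp only [hD]
    rw [← hc] at this
    nlinarith [hexp]
  set a : ℝ := (((j:ℝ)+1)*δ - k*(1 - c^(j+1)))/D with ha
  set b : ℝ := (k*(1-c^j) - (j:ℝ)*δ)/D with hb
  have ha0 : 0 ≤ a := div_nonneg (by linarith) hDpos.le
  have hb0 : 0 ≤ b := div_nonneg (by linarith) hDpos.le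
  -- key algebraic relation: c^(j+1) = c^j * c and c = 1 - 1/k
  have hpow : c^(j+1) = c^j * (1 - 1/k) := by rw [pow_succ, ← hc]
  -- the candidate
  set β : ℕ →₀ ℝ := Finsupp.single j a + Finsupp.single (j+1) b with hβ
  have hsum1 : (β.sum fun i x => (i:ℝ) * x) = (j:ℝ)*a + ((j:ℝ)+1)*b := by
    rw [hβ, sum_two]; push_cast; ring
  have hsum2 : (β.sum fun i x => (1 - c^i) * x)
      = (1-c^j)*a + (1-c^(j+1))*b := by
    rw [hβ, sum_two]
  have hsum3 : (β.sum fun _ x => x) = a + b := by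
    have : (β.sum fun _ x => x) = (β.sum fun i x => (fun _ : ℕ => (1:ℝ)) i * x) := by
      simp
    rw [this, hβ, sum_two]; ring
  have hDne : D ≠ 0 := hDpos.ne'
  have heq1 : (j:ℝ)*a + ((j:ℝ)+1)*b = k := by
    rw [ha, hb]
    field_simp
    rw [hpow, hD]
    field_simp
    ring
  have heq2 : (1-c^j)*a + (1-c^(j+1))*b = δ := by
    rw [ha, hb]
    field_simp
    rw [hpow, hD]
    field_simp
    ring
  have haddb : a + b = (δ - c^j)/D := by
    rw [ha, hb]
    rw [← add_div]
    congr 1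
    rw [hpow]
    field_simp
    ring
  have hfeas : SEFeasible δ k β := by
    refine ⟨?_, ?_, ?_, ?_⟩
    · intro i
      rw [hβ]
      simp only [Finsupp.add_apply, Finsupp.single_apply]
      split_ifs <;> linarith [ha0, hb0]
    · rw [hβ]
      simp only [Finsupp.add_apply, Finsupp.single_apply]
      rw [if_neg (by omega), if_neg (by omega)]; ring
    · rw [hsum1, heq1]
    · rw [← hc, hsum2, heq2]
  -- the value
  have hval : (1/k) * (β.sum fun _ x => x) = (1/k) * ((δ - c^j)/D) := by
    rw [hsum3, haddb]
  -- lower bound for any feasible γ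
  have hlow : ∀ γ : ℕ →₀ ℝ, SEFeasible δ k γ →
      (1/k) * ((δ - c^j)/D) ≤ (1/k) * (γ.sum fun _ x => x) := by
    intro γ ⟨hpos, h0, hsumk, hcons⟩
    rw [← hc] at hcons
    apply mul_le_mul_of_nonneg_left _ (by positivity : (0:ℝ) ≤ 1/k)
    -- coefficient bound
    have hcoef : ∀ i : ℕ, (1 - c^i - (i:ℝ)*c^j/k) / D ≤ 1 := by
      intro i
      rw [div_le_one hDpos, hD]
      have hbi := bern k hk i j
      rw [← hc] at hbi
      have hbi2 : c^j*(1+((j:ℝ)-i)/k) = c^j + (j:ℝ)*c^j/k - (i:ℝ)*c^j/k := by ring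
      linarith [hbi, hbi2]
    -- pointwise bound on support sums
    have hpt : ∑ i ∈ γ.support, (-(c^j)/(k*D) * (i:ℝ) + (1/D) * (1 - c^i)) * γ i
        ≤ ∑ i ∈ γ.support, γ i := by
      apply Finset.sum_le_sum
      intro i _
      have h1 : -(c^j)/(k*D) * (i:ℝ) + (1/D) * (1 - c^i)
          = (1 - c^i - (i:ℝ)*c^j/k) / D := by
        field_simp
        ring
      calc (-(c^j)/(k*D) * (i:ℝ) + (1/D) * (1 - c^i)) * γ i
          ≤ 1 * γ i := by
            apply mul_le_mul_of_nonneg_right _ (hpos i)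
            rw [h1]; exact hcoef i
        _ = γ i := one_mul _
    have hsplit : ∑ i ∈ γ.support, (-(c^j)/(k*D) * (i:ℝ) + (1/D) * (1 - c^i)) * γ i
        = -(c^j)/(k*D) * (γ.sum fun i x => (i:ℝ) * x)
          + (1/D) * (γ.sum fun i x => (1 - c^i) * x) := by
      rw [Finsupp.sum, Finsupp.sum, Finset.mul_sum, Finset.mul_sum, ← Finset.sum_add_distrib]
      apply Finset.sum_congr rfl
      intro i _
      ring
    have hzpos : (0:ℝ) ≤ 1/D := by positivity
    have hmid : -(c^j)/(k*D) * k + (1/D) * δ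
        ≤ -(c^j)/(k*D) * (γ.sum fun i x => (i:ℝ) * x)
          + (1/D) * (γ.sum fun i x => (1 - c^i) * x) := by
      rw [hsumk]
      have := mul_le_mul_of_nonneg_left hcons hzpos
      linarith
    have heq' : -(c^j)/(k*D) * k + (1/D) * δ = (δ - c^j)/D := by
      field_simp
      ring
    have hγeq : (γ.sum fun _ x => x) = ∑ i ∈ γ.support, γ i := rfl
    rw [hγeq]
    calc (δ - c^j)/D = -(c^j)/(k*D) * k + (1/D) * δ := heq'.symm
      _ ≤ _ := hmid
      _ = ∑ i ∈ γ.support, (-(c^j)/(k*D) * (i:ℝ) + (1/D) * (1 - c^i)) * γ i := hsplit.symm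
      _ ≤ ∑ i ∈ γ.support, γ i := hpt
  -- conclude via sInf
  refine ⟨β, hfeas, ?_, j, hj1, ?_⟩
  · rw [sizeExpansionFun]
    apply le_antisymm
    · refine le_csInf ⟨_, ⟨β, hfeas, rfl⟩⟩ ?_
      rintro y ⟨γ, hγ, rfl⟩
      rw [hval]
      exact hlow γ hγ
    · refine csInf_le ⟨(1/k) * ((δ - c^j)/D), ?_⟩ ⟨β, hfeas, rfl⟩
      rintro y ⟨γ, hγ, rfl⟩
      exact hlow γ hγ
  · intro i hi hi'
    rw [hβ]
    simp only [Finsupp.add_apply, Finsupp.single_apply]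
    rw [if_neg (fun h => hi h.symm), if_neg (fun h => hi' h.symm)]; ring
end

section
/- Fix δ ∈ (0,1) and let k = f_δ^{-1}(1/d₀) for an integer d₀ ≥ 1 (i.e., f_δ(k) = 1/d₀ and k > 1). Then (1 − 1/k)^{d₀} ≤ 1 − δd₀/k. -/
/-- If `f_δ(k) = 1/d₀` with `k > 1`, then
`(1 − 1/k)^{d₀} ≤ 1 − δd₀/k`. -/
theorem stmt12 (δ k : ℝ) (d₀ : ℕ) (hδ0 : 0 < δ) (hδ1 : δ < 1) (hd₀ : 1 ≤ d₀) (hk : 1 < k)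
    (hfk : sizeExpansionFun δ k = 1 / d₀) :
    (1 - 1 / k) ^ d₀ ≤ 1 - δ * d₀ / k := by
  by_contra hcon
  push_neg at hcon
  have hk0 : (0:ℝ) < k := lt_trans one_pos hk
  have hd0R : (0:ℝ) < (d₀:ℝ) := by exact_mod_cast Nat.pos_of_ne_zero (by omega)
  set q : ℝ := 1 - 1 / k with hqdef
  have hq0 : 0 < q := by
    have h1 : 1 / k < 1 := by rw [div_lt_one hk0]; exact hk
    simp only [hqdef]; linarith
  have hq1 : q < 1 := by
    have h1 : 0 < 1 / k := by positivity
    simp only [hqdef]; linarith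
  set L : ℝ := Real.log q with hLdef
  have hL : L < 0 := Real.log_neg hq0 hq1
  have hqe : q = Real.exp L := (Real.exp_log hq0).symm
  have hpow : ∀ i : ℕ, q ^ i = Real.exp (L * i) := by
    intro i
    rw [hqe, ← Real.exp_nat_mul, mul_comm]
  have hqd0 : (0:ℝ) < q ^ d₀ := pow_pos hq0 _
  set A : ℝ := 1 - q ^ d₀ + q ^ d₀ * ((d₀:ℝ) * L) with hAdef
  set B : ℝ := -(q ^ d₀ * L) with hBdef
  -- tangent-line bound from convexity of x ↦ q^x
  have htan : ∀ i : ℕ, 1 - q ^ i ≤ A + B * i := by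
    intro i
    have h1 : L * ((i:ℝ) - d₀) + 1 ≤ Real.exp (L * ((i:ℝ) - d₀)) := Real.add_one_le_exp _
    have h2 : q ^ d₀ * (L * ((i:ℝ) - d₀) + 1) ≤ q ^ d₀ * Real.exp (L * ((i:ℝ) - d₀)) :=
      mul_le_mul_of_nonneg_left h1 (le_of_lt hqd0)
    have h3 : q ^ d₀ * Real.exp (L * ((i:ℝ) - d₀)) = q ^ i := by
      rw [hpow d₀, hpow i, ← Real.exp_add,
        show L * (d₀:ℝ) + L * ((i:ℝ) - d₀) = L * i by ring]
    have h4 : A + B * i = 1 - q ^ d₀ * (L * ((i:ℝ) - d₀) + 1) := by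
      rw [hAdef, hBdef]; ring
    rw [h4]
    rw [h3] at h2
    linarith
  have hA : 0 < A := by
    have hne : -((d₀:ℝ) * L) ≠ 0 := by nlinarith
    have h1 : -((d₀:ℝ) * L) + 1 < Real.exp (-((d₀:ℝ) * L)) := by
      have := Real.add_one_lt_exp hne
      linarith
    have h2 : q ^ d₀ * (-((d₀:ℝ) * L) + 1) < q ^ d₀ * Real.exp (-((d₀:ℝ) * L)) :=
      mul_lt_mul_of_pos_left h1 hqd0
    have h3 : q ^ d₀ * Real.exp (-((d₀:ℝ) * L)) = 1 := by
      rw [hpow d₀, ← Real.exp_add, show L * (d₀:ℝ) + -((d₀:ℝ) * L) = 0 by ring,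
        Real.exp_zero]
    rw [h3] at h2
    rw [hAdef]
    nlinarith
  -- from the contradiction hypothesis
  have hε : k / d₀ * (1 - q ^ d₀) < δ := by
    have h1 : k * (1 - δ * d₀ / k) < k * q ^ d₀ := mul_lt_mul_of_pos_left hcon hk0
    have h2 : k * (δ * d₀ / k) = δ * d₀ := by field_simp
    rw [div_mul_eq_mul_div, div_lt_iff₀ hd0R]
    nlinarith
  set ε : ℝ := δ - k / d₀ * (1 - q ^ d₀) with hεdef
  have hεpos : 0 < ε := by rw [hεdef]; linarith
  -- the key identity
  have hid : A * (k / d₀) + B * k = k / d₀ * (1 - q ^ d₀) := by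
    rw [hAdef, hBdef]
    field_simp
    ring
  clear_value L
  clear_value A
  clear_value B
  clear_value ε
  set T : Set ℝ :=
    {y : ℝ | ∃ β : ℕ →₀ ℝ, SEFeasible δ k β ∧ y = (1 / k) * (β.sum fun _ b => b)} with hTdef
  have hfk' : sInf T = 1 / d₀ := hfk
  have hd0inv : (0:ℝ) < 1 / (d₀:ℝ) := by positivity
  have hne : T.Nonempty := by
    by_contra h
    rw [Set.not_nonempty_iff_eq_empty] at h
    rw [h, Real.sInf_empty] at hfk'
    linarith
  have hbound : ∀ y ∈ T, 1 / d₀ + ε / (A * k) ≤ y := by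
    rintro y ⟨β, ⟨hpos, h0, hsumi, hsumg⟩, hy⟩
    rw [← hqdef] at hsumg
    set S : ℝ := β.sum fun _ b => b with hSdef
    have hmono : (β.sum fun i b => (1 - q ^ i) * b) ≤ β.sum fun i b => (A + B * i) * b := by
      simp only [Finsupp.sum]
      refine Finset.sum_le_sum fun i _ => ?_
      exact mul_le_mul_of_nonneg_right (htan i) (hpos i)
    have hsplit : (β.sum fun i b => (A + B * i) * b)
        = A * S + B * (β.sum fun i b => (i:ℝ) * b) := by
      simp only [Finsupp.sum, hSdef, Finset.mul_sum, ← Finset.sum_add_distrib]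
      exact Finset.sum_congr rfl fun i _ => by ring
    have hmain : δ ≤ A * S + B * k := by
      rw [← hsumi]
      calc δ ≤ β.sum fun i b => (1 - q ^ i) * b := hsumg
        _ ≤ β.sum fun i b => (A + B * i) * b := hmono
        _ = A * S + B * (β.sum fun i b => (i:ℝ) * b) := hsplit
    have hδeq : δ = ε + (A * (k / d₀) + B * k) := by rw [hεdef, hid]; ring
    have h1 : A * (k / d₀ + ε / A) ≤ A * S := by
      have h2 : A * (k / d₀ + ε / A) = A * (k / d₀) + ε := by
        field_simp
      rw [h2]; linarith
    have hS : k / d₀ + ε / A ≤ S := le_of_mul_le_mul_left h1 hA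
    have hc2 : 1 / (d₀:ℝ) + ε / (A * k) = (1 / k) * (k / d₀ + ε / A) := by
      field_simp
    rw [hy, hc2]
    exact mul_le_mul_of_nonneg_left hS (by positivity)
  have hle : 1 / d₀ + ε / (A * k) ≤ sInf T := le_csInf hne hbound
  rw [hfk'] at hle
  have hpos' : 0 < ε / (A * k) := by positivity
  linarith
end

section
/- Fix δ ∈ (0,1). The Size-Expansion Function f_δ(k) is continuous on (1, ∞), satisfies lim_{k→1⁺} f_δ(k) = δ, and lim_{k→∞} f_δ(k) = 0. -/
set_option maxHeartbeats 1000000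


lemma fsum_single (w : ℕ → ℝ) (j : ℕ) (a : ℝ) :
    (Finsupp.single j a).sum (fun i b => w i * b) = w j * a :=
  Finsupp.sum_single_index (mul_zero _)

lemma fsum_le {w₁ w₂ : ℕ → ℝ} {β : ℕ →₀ ℝ} (hβ : ∀ i, 0 ≤ β i)
    (h : ∀ i, w₁ i ≤ w₂ i) :
    β.sum (fun i b => w₁ i * b) ≤ β.sum (fun i b => w₂ i * b) :=
  Finset.sum_le_sum fun i _ => mul_le_mul_of_nonneg_right (h i) (hβ i)

lemma fsum_id (β : ℕ →₀ ℝ) :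
    (β.sum fun _ b => b) = β.sum (fun i b => (1:ℝ) * b) :=
  Finsupp.sum_congr (fun _ _ => (one_mul _).symm)

-- lower bound for every element of the LP set
lemma sef_set_lb {δ k : ℝ} (hδ0 : 0 ≤ δ) (hk : 1 < k) {y : ℝ}
    (hy : y ∈ {y : ℝ | ∃ β : ℕ →₀ ℝ, SEFeasible δ k β ∧
      y = (1 / k) * (β.sum fun _ b => b)}) : δ / k ≤ y := by
  obtain ⟨β, hβ, rfl⟩ := hy
  have hk0 : (0:ℝ) < k := lt_trans one_pos hk
  have hq0 : (0:ℝ) ≤ 1 - 1/k := by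
    have : 1/k ≤ 1 := by rw [div_le_one hk0]; linarith
    linarith
  have h1 : δ ≤ β.sum (fun i b => (1 - (1 - 1/k)^i) * b) := hβ.2.2.2
  have h2 : β.sum (fun i b => (1 - (1 - 1/k)^i) * b) ≤ β.sum (fun i b => (1:ℝ) * b) := by
    refine fsum_le hβ.1 fun i => ?_
    have := pow_nonneg hq0 i
    linarith
  rw [← fsum_id] at h2
  rw [div_eq_mul_inv, mul_comm δ, ← one_div]
  exact mul_le_mul_of_nonneg_left (le_trans h1 h2) (by positivity)

lemma sef_bddBelow {δ k : ℝ} (hδ0 : 0 ≤ δ) (hk : 1 < k) :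
    BddBelow {y : ℝ | ∃ β : ℕ →₀ ℝ, SEFeasible δ k β ∧
      y = (1 / k) * (β.sum fun _ b => b)} :=
  ⟨δ / k, fun _ hy => sef_set_lb hδ0 hk hy⟩

lemma feasible_single {δ k : ℝ} (hk : 1 < k) {j : ℕ} (hj : j ≠ 0) {a : ℝ} (ha : 0 ≤ a)
    (hsum : (j:ℝ) * a = k) (hcon : δ ≤ (1 - (1 - 1/k)^j) * a) :
    SEFeasible δ k (Finsupp.single j a) := by
  refine ⟨fun i => ?_, Finsupp.single_eq_of_ne' hj, ?_, ?_⟩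
  · rw [Finsupp.single_apply]; split <;> simp [ha]
  · rw [fsum_single]; exact hsum
  · rw [fsum_single]; exact hcon

lemma sef_nonempty {δ k : ℝ} (hδ1 : δ ≤ 1) (hk : 1 < k) :
    Set.Nonempty {y : ℝ | ∃ β : ℕ →₀ ℝ, SEFeasible δ k β ∧
      y = (1 / k) * (β.sum fun _ b => b)} := by
  have hk0 : (0:ℝ) < k := lt_trans one_pos hk
  refine ⟨_, ⟨Finsupp.single 1 k, feasible_single hk one_ne_zero (le_of_lt hk0) ?_ ?_, rfl⟩⟩
  · push_cast; ring
  · rw [pow_one]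
    have : (1 - (1 - 1/k)) * k = 1 := by field_simp; ring
    rw [this]; exact hδ1

lemma sef_le {δ k : ℝ} (hδ0 : 0 ≤ δ) (hk : 1 < k) {β : ℕ →₀ ℝ} (hβ : SEFeasible δ k β) :
    sizeExpansionFun δ k ≤ (1 / k) * (β.sum fun _ b => b) :=
  csInf_le (sef_bddBelow hδ0 hk) ⟨β, hβ, rfl⟩

lemma sef_ge {δ k : ℝ} (hδ0 : 0 ≤ δ) (hδ1 : δ ≤ 1) (hk : 1 < k) :
    δ / k ≤ sizeExpansionFun δ k :=
  le_csInf (sef_nonempty hδ1 hk) (fun _ hy => sef_set_lb hδ0 hk hy)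
lemma fsum_add (w : ℕ → ℝ) (β₁ β₂ : ℕ →₀ ℝ) :
    (β₁ + β₂).sum (fun i b => w i * b)
      = β₁.sum (fun i b => w i * b) + β₂.sum (fun i b => w i * b) :=
  Finsupp.sum_add_index' (fun _ => mul_zero _) (fun _ _ _ => mul_add _ _ _)

lemma fsum_smul (w : ℕ → ℝ) (c : ℝ) (β : ℕ →₀ ℝ) :
    (c • β).sum (fun i b => w i * b) = c * β.sum (fun i b => w i * b) := by
  rw [Finsupp.sum_smul_index (fun _ => mul_zero _), Finsupp.mul_sum]
  exact Finsupp.sum_congr (fun i _ => by ring)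

lemma fsum_sub (w₁ w₂ : ℕ → ℝ) (β : ℕ →₀ ℝ) :
    β.sum (fun i b => (w₁ i - w₂ i) * b)
      = β.sum (fun i b => w₁ i * b) - β.sum (fun i b => w₂ i * b) := by
  rw [Finsupp.sum, Finsupp.sum, Finsupp.sum, ← Finset.sum_sub_distrib]
  exact Finset.sum_congr rfl fun i _ => by ring

lemma pow_sub_pow_le_n {x y : ℝ} (hy : 0 ≤ y) (hxy : y ≤ x) (hx : x ≤ 1) (n : ℕ) :
    x ^ n - y ^ n ≤ n * (x - y) := by
  induction n with
  | zero => simp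
  | succ n ih =>
    have hx0 : 0 ≤ x := le_trans hy hxy
    have h0 : y ^ n ≤ x ^ n := pow_le_pow_left₀ hy hxy n
    have h1 : y ^ n ≤ 1 := pow_le_one₀ hy (le_trans hxy hx)
    have h2 : x ^ (n+1) - y ^ (n+1) = x * (x ^ n - y ^ n) + (x - y) * y ^ n := by ring
    push_cast
    nlinarith

lemma pow_sub_pow_le_abs {x y : ℝ} (hx0 : 0 ≤ x) (hx1 : x ≤ 1) (hy0 : 0 ≤ y)
    (n : ℕ) : x ^ n - y ^ n ≤ n * |x - y| := by
  rcases le_total y x with h | h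
  · calc x ^ n - y ^ n ≤ n * (x - y) := pow_sub_pow_le_n hy0 h hx1 n
      _ ≤ n * |x - y| := mul_le_mul_of_nonneg_left (le_abs_self _) (Nat.cast_nonneg n)
  · have h1 : x ^ n ≤ y ^ n := pow_le_pow_left₀ hx0 h n
    have h2 : (0:ℝ) ≤ n * |x - y| := by positivity
    linarith

/-- The key transfer estimate: moving from parameter `k` to a nearby `k'` changes the
LP value by at most a multiple of `|k' - k|`. -/
lemma sef_transfer {δ k k' : ℝ} (hδ0 : 0 < δ) (hδ1 : δ < 1) (hk : 1 < k) (hk' : 1 < k')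
    (hnear : |k' - k| ≤ (1 - δ) / 2) :
    sizeExpansionFun δ k' ≤ sizeExpansionFun δ k + 4 * |k' - k| / (1 - δ) := by
  have hk0 : (0:ℝ) < k := lt_trans one_pos hk
  have hk'0 : (0:ℝ) < k' := lt_trans one_pos hk'
  set d : ℝ := |k' - k| with hd_def
  have hd0 : 0 ≤ d := abs_nonneg _
  have hd1 : k' - k ≤ d := le_abs_self _
  have hd2 : k - k' ≤ d := by rw [hd_def, abs_sub_comm]; exact le_abs_self _
  set T : ℝ := 4 * d / (k * (1 - δ)) with hT_def
  have hT0 : 0 ≤ T := by rw [hT_def]; apply div_nonneg (by positivity); nlinarith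
  set t : ℝ := min T 1 with ht_def
  have ht0 : 0 ≤ t := le_min hT0 zero_le_one
  have ht1 : t ≤ 1 := min_le_right _ _
  have htT : t ≤ T := min_le_left _ _
  set c : ℝ := (1 - t) * (k' / k) with hc_def
  have hc0 : 0 ≤ c := by
    apply mul_nonneg (by linarith) (by positivity)
  -- key algebra: feasibility of the combination
  have key : δ ≤ c * (δ - d / k') + t := by
    rcases le_or_gt T 1 with hcase | hcase
    · have htT' : t = T := min_eq_left hcase
      have hkk' : k' ≤ k * (3 - δ) / 2 := by nlinarith
      have h2 : k * (1 - δ) / 2 ≤ k - k' * δ := by nlinarith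
      have h3 : T * (k * (1 - δ) / 2) = 2 * d := by
        have h0 : k * (1 - δ) ≠ 0 := ne_of_gt (by nlinarith)
        have h1δ : (1:ℝ) - δ ≠ 0 := by linarith
        rw [hT_def]
        field_simp
        ring
      have key2 : δ * (k - k') + d ≤ T * (k - k' * δ + d) := by
        have : T * (k * (1 - δ) / 2) ≤ T * (k - k' * δ + d) := by
          apply mul_le_mul_of_nonneg_left (by linarith) hT0
        rw [h3] at this
        nlinarith
      have hrhs : c * (δ - d / k') + t = ((1 - T) * (k' * δ - d) + T * k) / k := by
        rw [hc_def, htT']; field_simp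
      rw [hrhs, le_div_iff₀ hk0]
      nlinarith
    · have htT' : t = 1 := min_eq_right (le_of_lt hcase)
      rw [hc_def, htT']
      simp
      linarith
  -- an auxiliary: e * k = d / k'
  have hek : |1/k - 1/k'| * k = d / k' := by
    have h1 : 1/k - 1/k' = (k' - k) / (k * k') := by field_simp
    rw [h1, abs_div, abs_of_pos (by positivity : (0:ℝ) < k * k'), ← hd_def]
    field_simp
  have hTle : T ≤ 4 * d / (1 - δ) := by
    rw [hT_def]
    apply div_le_div_of_nonneg_left (by positivity) (by linarith) (by nlinarith)
  -- show: for every feasible value v at k, f(k') ≤ v + T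
  have main : ∀ y ∈ {y : ℝ | ∃ β : ℕ →₀ ℝ, SEFeasible δ k β ∧
      y = (1 / k) * (β.sum fun _ b => b)}, sizeExpansionFun δ k' ≤ y + T := by
    rintro y ⟨β, hβ, rfl⟩
    set q : ℝ := 1 - 1/k with hq_def
    set q' : ℝ := 1 - 1/k' with hq'_def
    have hq0 : 0 ≤ q := by
      have : 1/k ≤ 1 := by rw [div_le_one hk0]; linarith
      rw [hq_def]; linarith
    have hq1 : q ≤ 1 := by
      have h : 0 < 1/k := by positivity
      rw [hq_def]; linarith
    have hq'0 : 0 ≤ q' := by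
      have : 1/k' ≤ 1 := by rw [div_le_one hk'0]; linarith
      rw [hq'_def]; linarith
    have hq'1 : q' ≤ 1 := by
      have h : 0 < 1/k' := by positivity
      rw [hq'_def]; linarith
    set e : ℝ := |1/k - 1/k'| with he_def
    have hqq' : |q' - q| = e := by
      rw [hq'_def, hq_def, he_def,
        show (1 - 1/k') - (1 - 1/k) = 1/k - 1/k' by ring]
    -- constraint transfer to k'
    have hA : δ - e * k ≤ β.sum (fun i b => (1 - q'^i) * b) := by
      have hptw : ∀ i : ℕ, (1 - q^i) - e * i ≤ 1 - q'^i := by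
        intro i
        have h1 : q'^i - q^i ≤ i * |q' - q| := pow_sub_pow_le_abs hq'0 hq'1 hq0 i
        rw [hqq'] at h1
        nlinarith
      have h2 : β.sum (fun i b => ((1 - q^i) - e * i) * b) ≤ β.sum (fun i b => (1 - q'^i) * b) :=
        fsum_le hβ.1 hptw
      have h3 : β.sum (fun i b => ((1 - q^i) - e * i) * b)
          = β.sum (fun i b => (1 - q^i) * b) - β.sum (fun i b => (e * i) * b) :=
        fsum_sub _ _ β
      have h4 : β.sum (fun i b => (e * i) * b) = e * β.sum (fun i b => (i:ℝ) * b) := by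
        rw [Finsupp.mul_sum]
        exact Finsupp.sum_congr (fun i _ => by ring)
      have h5 : δ ≤ β.sum (fun i b => (1 - q^i) * b) := hβ.2.2.2
      rw [h3, h4, hβ.2.2.1] at h2
      linarith
    -- build the feasible point for k'
    set β'' : ℕ →₀ ℝ := c • β + Finsupp.single 1 (t * k') with hβ''_def
    have hfeas : SEFeasible δ k' β'' := by
      refine ⟨fun i => ?_, ?_, ?_, ?_⟩
      · rw [hβ''_def, Finsupp.add_apply, Finsupp.smul_apply, smul_eq_mul]
        have h1 : 0 ≤ c * β i := mul_nonneg hc0 (hβ.1 i)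
        have h2 : 0 ≤ (Finsupp.single 1 (t * k') : ℕ →₀ ℝ) i := by
          rw [Finsupp.single_apply]; split
          · positivity
          · exact le_rfl
        linarith
      · rw [hβ''_def, Finsupp.add_apply, Finsupp.smul_apply, smul_eq_mul, hβ.2.1,
          Finsupp.single_eq_of_ne' one_ne_zero, mul_zero, add_zero]
      · rw [hβ''_def, fsum_add, fsum_smul, fsum_single, hβ.2.2.1]
        push_cast
        rw [hc_def]
        field_simp
        ring
      · rw [hβ''_def, fsum_add (fun i => (1 - (1 - 1/k')^i)), fsum_smul, fsum_single]
        have h1 : (1 - (1 - 1/k')^1) * (t * k') = t := by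
          rw [pow_one]; field_simp; ring
        rw [h1]
        have h2 : β.sum (fun i b => (1 - (1 - 1/k')^i) * b)
            = β.sum (fun i b => (1 - q'^i) * b) := by rw [hq'_def]
        rw [h2]
        have h6 : c * (δ - e * k) ≤ c * β.sum (fun i b => (1 - q'^i) * b) :=
          mul_le_mul_of_nonneg_left hA hc0
        have h7 : e * k = d / k' := by rw [he_def]; exact hek
        rw [h7] at h6
        linarith [key]
    -- value of the new point
    have hval : (1/k') * (β''.sum fun _ b => b)
        = (1 - t) * ((1/k) * (β.sum fun _ b => b)) + t := by
      rw [hβ''_def, fsum_id, fsum_add (fun _ => (1:ℝ)), fsum_smul, fsum_single, ← fsum_id]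
      have hcc : (1/k') * c = (1-t) * (1/k) := by rw [hc_def]; field_simp
      have h9 : (1/k') * (c * (β.sum fun _ b => b) + 1 * (t * k'))
          = ((1/k') * c) * (β.sum fun _ b => b) + (1/k') * (t * k') := by ring
      have h10 : (1/k') * (t * k') = t := by field_simp
      rw [h9, hcc, h10]
      ring
    have hv0 : 0 ≤ (1/k) * (β.sum fun _ b => b) := by
      apply mul_nonneg (by positivity)
      exact Finset.sum_nonneg fun i _ => hβ.1 i
    have hle : sizeExpansionFun δ k' ≤ (1/k') * (β''.sum fun _ b => b) :=
      sef_le (le_of_lt hδ0) hk' hfeas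
    rw [hval] at hle
    set v : ℝ := (1/k) * (β.sum fun _ b => b)
    nlinarith
  -- conclude via the inf on the k side
  have : sizeExpansionFun δ k' - T ≤ sizeExpansionFun δ k := by
    apply le_csInf (sef_nonempty (le_of_lt hδ1) hk)
    intro y hy
    linarith [main y hy]
  linarith


-- Part 1: continuity
lemma sef_contOn {δ : ℝ} (hδ0 : 0 < δ) (hδ1 : δ < 1) :
    ContinuousOn (sizeExpansionFun δ) (Set.Ioi 1) := by
  intro k0 hk0
  have hk0' : (1:ℝ) < k0 := hk0
  rw [Metric.continuousWithinAt_iff]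
  intro ε hε
  refine ⟨min ((1 - δ)/2) (ε * (1 - δ)/8),
    lt_min (div_pos (by linarith) (by norm_num))
      (div_pos (mul_pos hε (by linarith)) (by norm_num)), ?_⟩
  intro k hk hdist
  have hk' : (1:ℝ) < k := hk
  rw [Real.dist_eq] at hdist ⊢
  have hd1 : |k - k0| ≤ (1 - δ)/2 := le_of_lt (lt_of_lt_of_le hdist (min_le_left _ _))
  have hd2 : |k - k0| < ε * (1 - δ)/8 := lt_of_lt_of_le hdist (min_le_right _ _)
  have hd1' : |k0 - k| ≤ (1 - δ)/2 := by rwa [abs_sub_comm]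
  have h1 := sef_transfer hδ0 hδ1 hk0' hk' hd1
  have h2 := sef_transfer hδ0 hδ1 hk' hk0' hd1'
  rw [abs_sub_comm k0 k] at h2
  have h3 : 4 * |k - k0| / (1 - δ) < ε / 2 := by
    rw [div_lt_iff₀ (by linarith : (0:ℝ) < 1 - δ)]
    nlinarith [abs_nonneg (k - k0)]
  rw [abs_sub_lt_iff]
  constructor <;> linarith

-- Part 2: limit at 1⁺
lemma sef_tendsto_one {δ : ℝ} (hδ0 : 0 < δ) (hδ1 : δ < 1) :
    Filter.Tendsto (sizeExpansionFun δ) (nhdsWithin 1 (Set.Ioi 1)) (nhds δ) := by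
  rw [Metric.tendsto_nhdsWithin_nhds]
  intro ε hε
  obtain ⟨N, hN⟩ := exists_nat_gt (2/ε)
  have hN0R : (0:ℝ) < N := lt_trans (by positivity) hN
  have hN0 : N ≠ 0 := Nat.pos_iff_ne_zero.mp (Nat.cast_pos.mp hN0R)
  refine ⟨min (min (ε/2) ((1 - δ)/(2*N))) (1/2),
    lt_min (lt_min (by positivity) (div_pos (by linarith) (by positivity))) (by norm_num), ?_⟩
  intro k hk hdist
  have hk1 : (1:ℝ) < k := hk
  have hk0 : (0:ℝ) < k := by linarith
  rw [Real.dist_eq] at hdist ⊢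
  have hkd : k - 1 < min (min (ε/2) ((1 - δ)/(2*N))) (1/2) :=
    lt_of_le_of_lt (le_abs_self _) hdist
  have hkd1 : k - 1 < ε/2 := lt_of_lt_of_le hkd (le_trans (min_le_left _ _) (min_le_left _ _))
  have hkd2 : k - 1 < (1 - δ)/(2*N) :=
    lt_of_lt_of_le hkd (le_trans (min_le_left _ _) (min_le_right _ _))
  have hkd3 : k ≤ 3/2 := by have := min_le_right (min (ε/2) ((1 - δ)/(2*N))) (1/2); linarith
  -- lower bound
  have hlow : δ / k ≤ sizeExpansionFun δ k := sef_ge hδ0.le hδ1.le hk1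
  have hlow2 : δ - δ/k < ε := by
    have : δ - δ/k = δ * (k - 1) / k := by field_simp
    rw [this, div_lt_iff₀ hk0]
    nlinarith
  -- upper bound via a two-point feasible solution
  set q : ℝ := 1 - 1/k with hq_def
  have hq0 : 0 ≤ q := by
    have : 1/k ≤ 1 := by rw [div_le_one hk0]; linarith
    rw [hq_def]; linarith
  have hqk : q ≤ k - 1 := by
    rw [hq_def]
    have : 1/k ≥ 2 - k := by rw [ge_iff_le, le_div_iff₀ hk0]; nlinarith
    linarith
  have hq1 : q ≤ 1 := by linarith
  have hqN : q ^ N ≤ q := pow_le_of_le_one hq0 hq1 hN0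
  set β : ℕ →₀ ℝ := Finsupp.single 1 δ + Finsupp.single N ((k - δ)/N) with hβ_def
  have hkδ : 0 ≤ k - δ := by linarith
  have hfeas : SEFeasible δ k β := by
    refine ⟨fun i => ?_, ?_, ?_, ?_⟩
    · rw [hβ_def, Finsupp.add_apply]
      have h1 : 0 ≤ (Finsupp.single 1 δ : ℕ →₀ ℝ) i := by
        rw [Finsupp.single_apply]; split
        · exact hδ0.le
        · exact le_rfl
      have h2 : 0 ≤ (Finsupp.single N ((k - δ)/N) : ℕ →₀ ℝ) i := by
        rw [Finsupp.single_apply]; split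
        · positivity
        · exact le_rfl
      linarith
    · rw [hβ_def, Finsupp.add_apply, Finsupp.single_eq_of_ne' one_ne_zero,
        Finsupp.single_eq_of_ne' hN0, add_zero]
    · rw [hβ_def, fsum_add (fun i => (i:ℝ)), fsum_single, fsum_single]
      push_cast
      field_simp; ring
    · rw [hβ_def, fsum_add (fun i => (1 - (1 - 1/k)^i)), fsum_single, fsum_single,
        ← hq_def]
      have c0 : 1 - q = 1/k := by rw [hq_def]; ring
      have c1 : (2 - k) * ((1 - δ)/N) ≤ (1 - q^N) * ((k - δ)/N) := by
        apply mul_le_mul (by linarith) (by gcongr <;> linarith)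
          (div_nonneg (by linarith) hN0R.le) (by nlinarith)
      have c2 : (1/2) * ((1 - δ)/N) ≤ (2 - k) * ((1 - δ)/N) := by
        apply mul_le_mul_of_nonneg_right (by linarith) (div_nonneg (by linarith) hN0R.le)
      have c3 : δ - (1 - q) * δ ≤ k - 1 := by
        rw [c0]
        have : δ - 1/k * δ = δ * (k-1)/k := by field_simp
        rw [this, div_le_iff₀ hk0]
        nlinarith
      have c4 : (1/2) * ((1 - δ)/N) = (1 - δ)/(2*N) := by ring
      rw [pow_one]
      have c5 : δ - (1 - q) * δ < (1 - q^N) * ((k - δ)/N) := by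
        calc δ - (1 - q) * δ ≤ k - 1 := c3
          _ < (1 - δ)/(2*N) := hkd2
          _ = (1/2) * ((1 - δ)/N) := c4.symm
          _ ≤ (2 - k) * ((1 - δ)/N) := c2
          _ ≤ (1 - q^N) * ((k - δ)/N) := c1
      linarith [c5]
  have hval : (β.sum fun _ b => b) = δ + (k - δ)/N := by
    rw [hβ_def, fsum_id, fsum_add (fun _ => (1:ℝ)), fsum_single, fsum_single]
    ring
  have hup : sizeExpansionFun δ k ≤ (1/k) * (δ + (k - δ)/N) := by
    have := sef_le hδ0.le hk1 hfeas
    rwa [hval] at this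
  have hup2 : (1/k) * (δ + (k - δ)/N) < δ + ε := by
    have e1 : (1/k) * (δ + (k - δ)/N) ≤ δ + (k - δ)/N := by
      have h1k : 1/k ≤ 1 := by rw [div_le_one hk0]; linarith
      have hnn : 0 ≤ δ + (k - δ)/N := by positivity
      nlinarith
    have e2 : (k - δ)/N ≤ 2/N := by
      gcongr
      linarith
    have e3 : 2/N < ε := by
      rw [div_lt_iff₀ hN0R]
      rw [div_lt_iff₀ hε] at hN
      linarith
    linarith
  rw [abs_sub_lt_iff]
  constructor <;> linarith

-- Part 3: limit at ∞
lemma sef_tendsto_atTop {δ : ℝ} (hδ0 : 0 < δ) (hδ1 : δ < 1) :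
    Filter.Tendsto (sizeExpansionFun δ) Filter.atTop (nhds 0) := by
  rw [Metric.tendsto_atTop]
  intro ε hε
  have h1δ : (0:ℝ) < 1 - δ := by linarith
  refine ⟨max (2*δ/(1 - δ) + 2) (4*δ/(ε*(1 - δ)) + 2), fun k hk => ?_⟩
  have hk2 : 2*δ/(1 - δ) + 2 ≤ k := le_trans (le_max_left _ _) hk
  have hk3 : 4*δ/(ε*(1 - δ)) + 2 ≤ k := le_trans (le_max_right _ _) hk
  have hk1 : (1:ℝ) < k := by
    have : (0:ℝ) ≤ 2*δ/(1 - δ) := by positivity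
    linarith
  have hk0 : (0:ℝ) < k := by linarith
  set m : ℝ := k * (1 - δ)/δ with hm_def
  have hm2 : 2 ≤ m := by
    rw [hm_def, le_div_iff₀ hδ0]
    have := (div_le_iff₀ h1δ).mp (by linarith : 2*δ/(1 - δ) ≤ k - 2)
    nlinarith
  have hm0 : 0 < m := by linarith
  set i : ℕ := ⌊m⌋₊ with hi_def
  have hi_le : (i:ℝ) ≤ m := Nat.floor_le hm0.le
  have hi_gt : m - 1 < i := Nat.sub_one_lt_floor m
  have hiR : (1:ℝ) ≤ i := by linarith
  have hi0 : i ≠ 0 := by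
    intro h
    rw [h] at hiR; norm_num at hiR
  have hiR0 : (0:ℝ) < i := by linarith
  have him : m/2 ≤ (i:ℝ) := by linarith
  -- Bernoulli-type bound
  have hber : (1 - 1/k)^i * (k + i) ≤ k := by
    set x : ℝ := 1/k with hx_def
    have hx0 : 0 < x := by positivity
    have hx1 : x ≤ 1 := by rw [hx_def, div_le_one hk0]; linarith
    have b1 : 1 + (i:ℝ) * x ≤ (1 + x)^i := one_add_mul_le_pow (by linarith) i
    have b2 : (1 - x)^i * (1 + x)^i = (1 - x^2)^i := by
      rw [← mul_pow]; congr 1; ring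
    have b3 : (1 - x^2)^i ≤ 1 := pow_le_one₀ (by nlinarith) (by nlinarith)
    have b4 : (1 - x)^i * (1 + (i:ℝ) * x) ≤ 1 := by
      calc (1 - x)^i * (1 + (i:ℝ) * x) ≤ (1 - x)^i * (1 + x)^i :=
            mul_le_mul_of_nonneg_left b1 (pow_nonneg (by linarith) i)
        _ = (1 - x^2)^i := b2
        _ ≤ 1 := b3
    have b5 : (1 + (i:ℝ) * x) * k = k + i := by
      rw [hx_def]; field_simp
    calc (1 - 1/k)^i * (k + i) = (1 - x)^i * ((1 + (i:ℝ) * x) * k) := by rw [b5, hx_def]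
      _ = ((1 - x)^i * (1 + (i:ℝ) * x)) * k := by ring
      _ ≤ 1 * k := mul_le_mul_of_nonneg_right b4 hk0.le
      _ = k := one_mul k
  -- feasibility of the one-point solution
  have hidelta : (i:ℝ) * δ ≤ k * (1 - δ) := by
    have := (le_div_iff₀ hδ0).mp hi_le
    linarith
  have hfeas : SEFeasible δ k (Finsupp.single i (k/i)) := by
    apply feasible_single hk1 hi0 (by positivity)
    · field_simp
    · have hq0 : (0:ℝ) ≤ (1 - 1/k)^i := by
        apply pow_nonneg
        have : 1/k ≤ 1 := by rw [div_le_one hk0]; linarith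
        linarith
      have key : δ * i ≤ (1 - (1 - 1/k)^i) * k := by
        nlinarith [mul_le_mul_of_nonneg_left hber hk0.le]
      have hthis : (1 - (1 - 1/k)^i) * (k/i) = ((1 - (1 - 1/k)^i) * k)/i := by ring
      rw [hthis, le_div_iff₀ hiR0]
      linarith
  have hval : ((Finsupp.single i (k/i) : ℕ →₀ ℝ).sum fun _ b => b) = k/i := by
    rw [fsum_id, fsum_single, one_mul]
  have hup : sizeExpansionFun δ k ≤ 1/(i:ℝ) := by
    have := sef_le hδ0.le hk1 hfeas
    rw [hval] at this
    have e : (1/k) * (k/i) = 1/(i:ℝ) := by field_simp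
    rwa [e] at this
  have hlow : 0 ≤ sizeExpansionFun δ k := by
    have := sef_ge hδ0.le hδ1.le hk1
    have : 0 ≤ δ/k := by positivity
    linarith [sef_ge hδ0.le hδ1.le hk1]
  rw [Real.dist_eq, sub_zero, abs_of_nonneg hlow]
  have e1 : 1/(i:ℝ) ≤ 2/m := by
    rw [div_le_div_iff₀ hiR0 hm0]
    linarith
  have e2 : 2/m < ε := by
    rw [div_lt_iff₀ hm0, hm_def]
    have h4 : 4*δ/(ε*(1 - δ)) ≤ k - 2 := by linarith
    have h5 : 4*δ ≤ (k - 2) * (ε * (1 - δ)) := (div_le_iff₀ (by positivity)).mp h4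
    rw [← mul_div_assoc, lt_div_iff₀ hδ0]
    nlinarith [mul_pos hε h1δ]
  linarith

/-- For `δ ∈ (0,1)`, `f_δ` is continuous on `(1, ∞)`, tends to `δ`
as `k → 1⁺`, and tends to `0` as `k → ∞`. -/
theorem stmt13 (δ : ℝ) (hδ0 : 0 < δ) (hδ1 : δ < 1) :
    ContinuousOn (sizeExpansionFun δ) (Set.Ioi 1) ∧
    Filter.Tendsto (sizeExpansionFun δ) (nhdsWithin 1 (Set.Ioi 1)) (nhds δ) ∧
    Filter.Tendsto (sizeExpansionFun δ) Filter.atTop (nhds 0) := by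
  exact ⟨sef_contOn hδ0 hδ1, sef_tendsto_one hδ0 hδ1, sef_tendsto_atTop hδ0 hδ1⟩
end

section
/- Under the same setting (G a (c,d,α,δ)-bipartite expander, C₀ with minimum distance d₀, t = d₀/2, x ∈ F₂^n, y ∈ T(G,C₀), F = {i : x_i ≠ y_i}, and flipping weights p_i defined as in the RandFlip algorithm), the number of indices i ∈ [n] \ F with p_i > 0 is at most (c/t)·|F|. Consequently, flipping any subset of bits with positive weight yields x' with d_H(x', y) ≤ (1 + c/t)·d_H(x, y). -/
open Finset
open scoped Classical

/-- With the `RandFlip` weights `p_i` (setting as in Statement 16,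
`t = d₀/2`, `F = {i : x_i ≠ y_i}`), the number of indices `i ∉ F` with `p_i > 0` is at
most `(c/t)·|F|`; consequently flipping any subset of positive-weight bits yields `x'`
with `d_H(x', y) ≤ (1 + c/t)·d_H(x, y)`. -/
theorem stmt17 (n c d d₀ : ℕ) (α δ : ℝ) (R : Type*) [Fintype R]
    (νe : R → Fin d → Fin n)
    (hinj : ∀ v : R, Function.Injective (νe v))
    (hleft : ∀ u : Fin n, (Finset.univ.filter (fun v : R => ∃ i, νe v i = u)).card = c)
    (hexp : ∀ S : Finset (Fin n), (S.card : ℝ) ≤ α * n →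
      δ * c * S.card ≤ ((Finset.univ.filter (fun v : R => ∃ u ∈ S, ∃ i, νe v i = u)).card : ℝ))
    (C₀ : Submodule (ZMod 2) (Fin d → ZMod 2))
    (hd₀min : ∀ w₀ ∈ C₀, w₀ ≠ 0 → d₀ ≤ hammingNorm w₀)
    (hd₀ex : ∃ w₀ ∈ C₀, w₀ ≠ 0 ∧ hammingNorm w₀ = d₀)
    (x y : Fin n → ZMod 2)
    (hy : ∀ v : R, (fun i => y (νe v i)) ∈ C₀)
    (w : R → Fin d → ZMod 2)
    (hwC : ∀ v, w v ∈ C₀)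
    (hwmin : ∀ v, ∀ c' ∈ C₀,
      hammingDist (w v) (fun i => x (νe v i)) ≤ hammingDist c' (fun i => x (νe v i)))
    (iv : R → Fin n)
    (hiv : ∀ v, 1 ≤ hammingDist (w v) (fun i => x (νe v i)) →
      (∃ j, νe v j = iv v ∧ w v j ≠ x (νe v j)) ∧
      ∀ j, w v j ≠ x (νe v j) → iv v ≤ νe v j)
    (p : Fin n → ℝ)
    (hp : ∀ i : Fin n, p i =
      ∑ v ∈ Finset.univ.filter (fun v : R =>
          1 ≤ hammingDist (w v) (fun j => x (νe v j)) ∧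
          (hammingDist (w v) (fun j => x (νe v j)) : ℝ) < (d₀ : ℝ) / 2 ∧ iv v = i),
        ((d₀ : ℝ) / 2 - hammingDist (w v) (fun j => x (νe v j))) / (c * ((d₀ : ℝ) / 2))) :
    ((Finset.univ.filter (fun i => x i = y i ∧ 0 < p i)).card : ℝ) ≤
      (c : ℝ) / ((d₀ : ℝ) / 2) * (hammingDist x y : ℝ) ∧
    ∀ x' : Fin n → ZMod 2, (∀ i, x' i ≠ x i → 0 < p i) →
      (hammingDist x' y : ℝ) ≤ (1 + (c : ℝ) / ((d₀ : ℝ) / 2)) * (hammingDist x y : ℝ) := by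
  classical
  set F : Finset (Fin n) := Finset.univ.filter (fun i => x i ≠ y i) with hF
  have hdxy : hammingDist x y = F.card := by
    rw [hammingDist]
  have hd₀pos : 0 < d₀ := by
    obtain ⟨w₀, _, hne, hnorm⟩ := hd₀ex
    rw [← hnorm]; exact hammingNorm_pos_iff.mpr hne
  set Nv : R → Finset (Fin n) := fun v => F.filter (fun u => ∃ j, νe v j = u) with hNv
  set Heavy : Finset R := Finset.univ.filter (fun v => d₀ ≤ 2 * (Nv v).card) with hHeavy
  set Set1 : Finset (Fin n) := Finset.univ.filter (fun i => x i = y i ∧ 0 < p i) with hSet1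
  -- Step A: every i ∈ Set1 comes from a heavy vertex
  have key : ∀ i ∈ Set1, ∃ v ∈ Heavy, iv v = i := by
    intro i hi
    rw [hSet1, mem_filter] at hi
    obtain ⟨-, hxy, hpi⟩ := hi
    rw [hp] at hpi
    obtain ⟨v, hv, -⟩ := Finset.exists_ne_zero_of_sum_ne_zero (ne_of_gt hpi)
    rw [mem_filter] at hv
    obtain ⟨-, hD1, hDlt, hivi⟩ := hv
    set D := hammingDist (w v) (fun j => x (νe v j)) with hD
    -- w v disagrees with y on N(v)
    have hwy : w v ≠ (fun j => y (νe v j)) := by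
      obtain ⟨⟨j, hj, hne⟩, -⟩ := hiv v hD1
      intro heq
      apply hne
      have : w v j = y (νe v j) := congrFun heq j
      rw [this, hj, hivi, hxy, ← hivi, ← hj]
    have hdist0 : d₀ ≤ hammingDist (w v) (fun j => y (νe v j)) := by
      rw [hammingDist_eq_hammingNorm]
      exact hd₀min _ (C₀.add_mem (C₀.neg_mem (hwC v)) (hy v)) (fun h => hwy (neg_add_eq_zero.mp h))
    have htri : hammingDist (w v) (fun j => y (νe v j)) ≤
        D + hammingDist (fun j => x (νe v j)) (fun j => y (νe v j)) :=
      hammingDist_triangle _ _ _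
    have hmap : hammingDist (fun j => x (νe v j)) (fun j => y (νe v j)) ≤ (Nv v).card := by
      rw [hammingDist]
      apply Finset.card_le_card_of_injOn (νe v)
      · intro j hj
        simp only [Finset.mem_coe, mem_filter, mem_univ, true_and] at hj
        rw [Finset.mem_coe, hNv, mem_filter, hF, mem_filter]
        exact ⟨⟨mem_univ _, hj⟩, ⟨j, rfl⟩⟩
      · intro a _ b _ h; exact hinj v h
    have h2D : 2 * D < d₀ := by
      have : (2 * D : ℝ) < (d₀ : ℝ) := by push_cast; linarith
      exact_mod_cast this
    refine ⟨v, ?_, hivi⟩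
    rw [hHeavy, mem_filter]
    exact ⟨mem_univ _, by omega⟩
  have hcard1 : Set1.card ≤ Heavy.card := by
    apply Finset.card_le_card_of_surjOn iv
    intro i hi
    obtain ⟨v, hv, hvi⟩ := key i hi
    exact ⟨v, hv, hvi⟩
  -- double counting
  have hdouble : ∑ v : R, (Nv v).card = F.card * c := by
    have hstep : ∀ u ∈ F, (∑ v : R, if ∃ j, νe v j = u then 1 else 0) = c := by
      intro u _
      rw [← Finset.card_filter]
      exact hleft u
    calc ∑ v : R, (Nv v).card
        = ∑ v : R, ∑ u ∈ F, (if ∃ j, νe v j = u then 1 else 0) := by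
          simp_rw [hNv, Finset.card_filter]
      _ = ∑ u ∈ F, ∑ v : R, (if ∃ j, νe v j = u then 1 else 0) := Finset.sum_comm
      _ = ∑ u ∈ F, c := Finset.sum_congr rfl hstep
      _ = F.card * c := by rw [Finset.sum_const, smul_eq_mul]
  have hC : d₀ * Heavy.card ≤ 2 * (F.card * c) := by
    calc d₀ * Heavy.card = ∑ _v ∈ Heavy, d₀ := by
          rw [Finset.sum_const, smul_eq_mul, mul_comm]
      _ ≤ ∑ v ∈ Heavy, 2 * (Nv v).card :=
          Finset.sum_le_sum (fun v hv => (mem_filter.mp hv).2)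
      _ ≤ ∑ v : R, 2 * (Nv v).card :=
          Finset.sum_le_sum_of_subset (Finset.filter_subset _ _)
      _ = 2 * ∑ v : R, (Nv v).card := by rw [Finset.mul_sum]
      _ = 2 * (F.card * c) := by rw [hdouble]
  have hd₀R : (0:ℝ) < d₀ := by exact_mod_cast hd₀pos
  have h1 : (Set1.card : ℝ) ≤ (c : ℝ) / ((d₀ : ℝ) / 2) * (hammingDist x y : ℝ) := by
    have hcast : (d₀ : ℝ) * Heavy.card ≤ 2 * ((F.card : ℝ) * c) := by exact_mod_cast hC
    have hle : (Set1.card : ℝ) ≤ (Heavy.card : ℝ) := by exact_mod_cast hcard1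
    rw [hdxy]
    have heq : (c : ℝ) / ((d₀ : ℝ) / 2) * (F.card : ℝ) = 2 * ((F.card : ℝ) * c) / d₀ := by
      field_simp
    rw [heq, le_div_iff₀ hd₀R]
    nlinarith
  refine ⟨h1, ?_⟩
  intro x' hx'
  have hsub : Finset.univ.filter (fun i => x' i ≠ y i) ⊆ F ∪ Set1 := by
    intro i hi
    rw [mem_filter] at hi
    rw [Finset.mem_union, hF, mem_filter, hSet1, mem_filter]
    by_cases h : x i = y i
    · exact Or.inr ⟨mem_univ _, h, hx' i (fun he => hi.2 (by rw [he, h]))⟩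
    · exact Or.inl ⟨mem_univ _, h⟩
  have hd' : hammingDist x' y ≤ F.card + Set1.card := by
    rw [hammingDist]
    calc (Finset.univ.filter (fun i => x' i ≠ y i)).card
        ≤ (F ∪ Set1).card := Finset.card_le_card hsub
      _ ≤ F.card + Set1.card := Finset.card_union_le _ _
  have hd'R : (hammingDist x' y : ℝ) ≤ (F.card : ℝ) + (Set1.card : ℝ) := by exact_mod_cast hd'
  rw [hdxy] at h1 ⊢
  linarith
end

section
/- Let k > 1 real, m, i positive integers with i ≤ km − m and km an integer. The probability that a uniformly random m-element subset S' of a km-element set S intersects a fixed i-element subset T ⊆ S is 1 − binom(km−i, m)/binom(km, m), and this quantity satisfies 1 − (1−1/k)^i ≤ 1 − binom(km−i,m)/binom(km,m) ≤ 1 − (1−1/k)^i + i(i−1)/(2(k−1)(km−i)). -/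
/-!
A random `m`-subset misses `T` exactly when it lies in `S \ T`, which gives the
probability `1 - C(K-i, m)/C(K, m)`. The ratio `C(K-i, m)/C(K, m)` is the product of the
factors `(km - m - j)/(km - j)` over `j < i`. Each factor falls short of `1 - 1/k` by
`j/(k(km - j))`, and this is at most `j/((k-1)(km - i))`. For numbers in `[0, 1]`, the
difference of two products is at most the sum of the differences of their factors.
Summing `j` over `j < i` gives `i(i-1)/2`, which is the error term.
-/

open Finset
open scoped Classical

theorem Finset.prod_sub_prod_le_sum_sub {ι R : Type*} [CommRing R] [LinearOrder R]
    [IsStrictOrderedRing R] (s : Finset ι) {a b : ι → R} (ha : ∀ j ∈ s, 0 ≤ a j)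
    (hab : ∀ j ∈ s, a j ≤ b j) (hb : ∀ j ∈ s, b j ≤ 1) :
    ∏ j ∈ s, b j - ∏ j ∈ s, a j ≤ ∑ j ∈ s, (b j - a j) := by
  induction s using Finset.cons_induction with
  | empty => simp
  | cons x s hx ih =>
    simp only [forall_mem_cons] at ha hab hb
    rw [prod_cons, prod_cons, sum_cons]
    have hA : 0 ≤ ∏ j ∈ s, a j := prod_nonneg ha.2
    have hAB : ∏ j ∈ s, a j ≤ ∏ j ∈ s, b j := prod_le_prod ha.2 hab.2
    have hB : ∏ j ∈ s, b j ≤ 1 := prod_le_one (fun j hj => (ha.2 j hj).trans (hab.2 j hj)) hb.2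
    have := ih ha.2 hab.2 hb.2
    -- b x * B - a x * A = b x * (B - A) + (b x - a x) * A
    nlinarith [mul_le_mul_of_nonneg_right hb.1 (sub_nonneg.2 hAB),
      mul_le_mul_of_nonneg_left (hAB.trans hB) (sub_nonneg.2 hab.1)]

theorem Finset.sum_range_cast_id_mul_two {R : Type*} [CommRing R] (n : ℕ) :
    (∑ j ∈ range n, (j : R)) * 2 = n * (n - 1) := by
  induction n with
  | zero => simp
  | succ n ih => rw [sum_range_succ, add_mul, ih]; push_cast; ring

theorem Nat.cast_descFactorial_eq_prod_range {R : Type*} [CommRing R] (n i : ℕ) :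
    (n.descFactorial i : R) = ∏ j ∈ range i, ((n : R) - j) := by
  rcases lt_or_ge n i with hni | hin
  · rw [Nat.descFactorial_eq_zero_iff_lt.2 hni, Nat.cast_zero, eq_comm]
    exact prod_eq_zero (mem_range.2 hni) (sub_self _)
  · rw [Nat.descFactorial_eq_prod_range, Nat.cast_prod]
    refine prod_congr rfl fun j hj => ?_
    rw [Nat.cast_sub ((mem_range.1 hj).le.trans hin)]

theorem Nat.choose_sub_mul_descFactorial (n m i : ℕ) :
    (n - i).choose m * n.descFactorial i = n.choose m * (n - m).descFactorial i := by
  have hm := Nat.choose_mul (n := n) (Nat.le_add_right m i)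
  have hi := Nat.choose_mul (n := n) (Nat.le_add_left i m)
  rw [Nat.add_sub_cancel_left, Nat.choose_symm_add] at hm
  rw [Nat.add_sub_cancel] at hi
  rw [Nat.descFactorial_eq_factorial_mul_choose, Nat.descFactorial_eq_factorial_mul_choose]
  calc (n - i).choose m * (i.factorial * n.choose i)
      = i.factorial * (n.choose i * (n - i).choose m) := by ring
    _ = i.factorial * (n.choose m * (n - m).choose i) := by rw [← hi, hm]
    _ = n.choose m * (i.factorial * (n - m).choose i) := by ring

theorem Nat.choose_sub_div_choose_eq_prod {n m i : ℕ} (h : m + i ≤ n) :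
    ((n - i).choose m : ℝ) / n.choose m = ∏ j ∈ range i, (((n : ℝ) - m - j) / (n - j)) := by
  have hchoose : (n.choose m : ℝ) ≠ 0 := Nat.cast_ne_zero.2 (Nat.choose_pos (by omega)).ne'
  have hprod : ∏ j ∈ range i, ((n : ℝ) - j) ≠ 0 := by
    rw [← Nat.cast_descFactorial_eq_prod_range, Nat.cast_ne_zero, Ne,
      Nat.descFactorial_eq_zero_iff_lt]
    omega
  rw [prod_div_distrib, div_eq_div_iff hchoose hprod, ← Nat.cast_descFactorial_eq_prod_range]
  have hnm : (n : ℝ) - m = ((n - m : ℕ) : ℝ) := by rw [Nat.cast_sub (by omega)]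
  simp_rw [hnm, ← Nat.cast_descFactorial_eq_prod_range]
  exact_mod_cast (Nat.choose_sub_mul_descFactorial n m i).trans (mul_comm _ _)

theorem Finset.card_filter_inter_nonempty_add_choose {γ : Type*} [DecidableEq γ]
    {S T : Finset γ} (hTS : T ⊆ S) (m : ℕ) :
    #{A ∈ S.powersetCard m | (A ∩ T).Nonempty} + (#S - #T).choose m = (#S).choose m := by
  have hmiss : {A ∈ S.powersetCard m | ¬(A ∩ T).Nonempty} = (S \ T).powersetCard m := by
    ext A
    simp only [mem_filter, mem_powersetCard, subset_sdiff, not_nonempty_iff_eq_empty,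
      disjoint_iff_inter_eq_empty]
    tauto
  rw [← card_powersetCard m S,
    ← card_filter_add_card_filter_not (s := S.powersetCard m) (fun A => (A ∩ T).Nonempty), hmiss,
    card_powersetCard, card_sdiff_of_subset hTS]

theorem Finset.card_filter_inter_nonempty_div_card_powersetCard {γ : Type*} [DecidableEq γ]
    {S T : Finset γ} (hTS : T ⊆ S) {m : ℕ} (hm : m ≤ #S) :
    (#{A ∈ S.powersetCard m | (A ∩ T).Nonempty} : ℝ) / #(S.powersetCard m) =
      1 - ((#S - #T).choose m : ℝ) / (#S).choose m := by
  have hchoose : ((#S).choose m : ℝ) ≠ 0 := Nat.cast_ne_zero.2 (Nat.choose_pos hm).ne'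
  rw [card_powersetCard, eq_sub_iff_add_eq, ← add_div, div_eq_one_iff_eq hchoose]
  exact_mod_cast card_filter_inter_nonempty_add_choose hTS m

/-- The probability that a random `m`-subset of a `km`-set misses a given point, conditioned
on its missing `j` other given points. -/
noncomputable def missFactor (k m j : ℝ) : ℝ := (k * m - m - j) / (k * m - j)

section MissFactor

variable {k m j : ℝ}

theorem one_sub_inv_sub_missFactor_eq (hk : k ≠ 0) (hj : k * m - j ≠ 0) :
    1 - 1 / k - missFactor k m j = j / (k * (k * m - j)) := by
  rw [missFactor]
  field_simp
  ring

theorem missFactor_nonneg (hm : 0 ≤ m) (hj : j < k * m - m) : 0 ≤ missFactor k m j :=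
  div_nonneg (by linarith) (by linarith)

theorem missFactor_le_one_sub_inv (hk : 0 < k) (hm : 0 ≤ m) (hj0 : 0 ≤ j)
    (hj : j < k * m - m) : missFactor k m j ≤ 1 - 1 / k := by
  have h := one_sub_inv_sub_missFactor_eq (m := m) (j := j) hk.ne' (by linarith)
  have : 0 ≤ j / (k * (k * m - j)) := div_nonneg hj0 (mul_pos hk (by linarith)).le
  linarith

theorem one_sub_inv_sub_missFactor_le {i : ℝ} (hk : 1 < k) (hj0 : 0 ≤ j) (hji : j < i)
    (hi : i ≤ k * m - m) : 1 - 1 / k - missFactor k m j ≤ j / ((k - 1) * (k * m - i)) := by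
  have hmi : 0 < k * m - i := by nlinarith
  rw [one_sub_inv_sub_missFactor_eq (by linarith) (by linarith)]
  exact div_le_div_of_nonneg_left hj0 (mul_pos (by linarith) hmi)
    (mul_le_mul (by linarith) (by linarith) hmi.le (by linarith))

variable {i : ℕ}

theorem prod_missFactor_le_pow (hk : 0 < k) (hm : 0 ≤ m) (hi : (i : ℝ) ≤ k * m - m) :
    ∏ j ∈ range i, missFactor k m j ≤ (1 - 1 / k) ^ i := by
  have hj : ∀ j ∈ range i, (j : ℝ) < k * m - m := fun j hj =>
    (Nat.cast_lt.2 (mem_range.1 hj)).trans_le hi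
  calc ∏ j ∈ range i, missFactor k m j
      ≤ ∏ _j ∈ range i, (1 - 1 / k) := prod_le_prod (fun j hj' => missFactor_nonneg hm (hj j hj'))
        fun j hj' => missFactor_le_one_sub_inv hk hm j.cast_nonneg (hj j hj')
    _ = (1 - 1 / k) ^ i := by rw [prod_const, card_range]

theorem pow_sub_prod_missFactor_le (hk : 1 < k) (hm : 0 ≤ m) (hi : (i : ℝ) ≤ k * m - m) :
    (1 - 1 / k) ^ i - ∏ j ∈ range i, missFactor k m j ≤
      i * (i - 1) / (2 * (k - 1) * (k * m - i)) := by
  have hji : ∀ j ∈ range i, (j : ℝ) < i := fun j hj => Nat.cast_lt.2 (mem_range.1 hj)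
  calc (1 - 1 / k) ^ i - ∏ j ∈ range i, missFactor k m j
      = ∏ _j ∈ range i, (1 - 1 / k) - ∏ j ∈ range i, missFactor k m j := by
        rw [prod_const, card_range]
    _ ≤ ∑ j ∈ range i, (1 - 1 / k - missFactor k m j) :=
        prod_sub_prod_le_sum_sub _ (fun j hj => missFactor_nonneg hm ((hji j hj).trans_le hi))
          (fun j hj =>
            missFactor_le_one_sub_inv (by linarith) hm j.cast_nonneg ((hji j hj).trans_le hi))
          fun _ _ => sub_le_self _ (by positivity)
    _ ≤ ∑ j ∈ range i, (j : ℝ) / ((k - 1) * (k * m - i)) :=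
        sum_le_sum fun j hj => one_sub_inv_sub_missFactor_le hk j.cast_nonneg (hji j hj) hi
    _ = i * (i - 1) / (2 * (k - 1) * (k * m - i)) := by
        have hsum : ∑ j ∈ range i, (j : ℝ) = i * (i - 1) / 2 :=
          eq_div_of_mul_eq two_ne_zero (sum_range_cast_id_mul_two i)
        rw [← sum_div, hsum, div_div, mul_assoc]

end MissFactor

theorem stmt19_general (k : ℝ) (m i K : ℕ) (hk : 1 < k)
    (hK : (K : ℝ) = k * m) (hile : (i : ℝ) ≤ k * m - m)
    {γ : Type*} [DecidableEq γ] (S T : Finset γ)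
    (hTS : T ⊆ S) (hS : S.card = K) (hT : T.card = i) :
    (((S.powersetCard m).filter (fun A => (A ∩ T).Nonempty)).card : ℝ) /
        ((S.powersetCard m).card : ℝ) =
      1 - ((K - i).choose m : ℝ) / (K.choose m : ℝ) ∧
    1 - (1 - 1 / k) ^ i ≤ 1 - ((K - i).choose m : ℝ) / (K.choose m : ℝ) ∧
    1 - ((K - i).choose m : ℝ) / (K.choose m : ℝ) ≤
      1 - (1 - 1 / k) ^ i + (i : ℝ) * (i - 1) / (2 * (k - 1) * (k * m - i)) := by
  have hmi : m + i ≤ K := by exact_mod_cast (show ((m + i : ℕ) : ℝ) ≤ K by push_cast; linarith)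
  have hratio : ((K - i).choose m : ℝ) / K.choose m =
      ∏ j ∈ range i, missFactor k m j := by
    rw [Nat.choose_sub_div_choose_eq_prod hmi, hK]
    rfl
  refine ⟨?_, ?_, ?_⟩
  · rw [card_filter_inter_nonempty_div_card_powersetCard hTS (by omega), hS, hT]
  · linarith [prod_missFactor_le_pow (by linarith) m.cast_nonneg hile]
  · linarith [pow_sub_prod_missFactor_le hk m.cast_nonneg hile]

/-- For real `k > 1` and positive integers `m, i` with `i ≤ km − m`
and `K = km` an integer: the probability that a uniformly random `m`-subset `S'` of a
`K`-element set `S` intersects a fixed `i`-element subset `T ⊆ S` equals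
`1 − binom(K−i, m)/binom(K, m)`, and
`1 − (1−1/k)^i ≤ 1 − binom(K−i,m)/binom(K,m) ≤ 1 − (1−1/k)^i + i(i−1)/(2(k−1)(km−i))`. -/
theorem stmt19 (k : ℝ) (m i K : ℕ) (hk : 1 < k) (hm : 0 < m) (hi : 0 < i)
    (hK : (K : ℝ) = k * m) (hile : (i : ℝ) ≤ k * m - m)
    {γ : Type*} [DecidableEq γ] (S T : Finset γ)
    (hTS : T ⊆ S) (hS : S.card = K) (hT : T.card = i) :
    (((S.powersetCard m).filter (fun A => (A ∩ T).Nonempty)).card : ℝ) /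
        ((S.powersetCard m).card : ℝ) =
      1 - ((K - i).choose m : ℝ) / (K.choose m : ℝ) ∧
    1 - (1 - 1 / k) ^ i ≤ 1 - ((K - i).choose m : ℝ) / (K.choose m : ℝ) ∧
    1 - ((K - i).choose m : ℝ) / (K.choose m : ℝ) ≤
      1 - (1 - 1 / k) ^ i + (i : ℝ) * (i - 1) / (2 * (k - 1) * (k * m - i)) :=
  stmt19_general k m i K hk hK hile S T hTS hS hT
end
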